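/- arXiv:1912.03705 — 9 statements merged into one kernel-verified Lean document; each statement's English description precedes it below -/
import Mathlib

section
/- If F is a forest on n vertices, then F has a k-sparse set of size at least ⌈(k+1)n/(k+2)⌉. -/
/-!
Induct on the number of vertices. If every vertex has degree at most `k`, take all of them.
Otherwise choose two vertices `v`, `u` of degree `> k` at maximal distance. Every other vertex
of degree `> k` then lies in the branch at `v` containing `u`, so at least `k` branches at `v`
contain only vertices of degree `≤ k`. Their union `W`, together with `v` when there are only
`k` of them, is a `k`-sparse set of at least `k + 1` vertices attached to the rest of the forest
through a single vertex `x`. Deleting `W ∪ {x}`, a `k`-sparse set of what is left extends by `W`,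
and `|W| / (|W| + 1) ≥ (k + 1) / (k + 2)`.
-/

open SimpleGraph

/-- A set `S` of vertices is `k`-sparse in `G` if every vertex of `S` has at most `k`
neighbors inside `S`. -/
def KSparse {V : Type*} (G : SimpleGraph V) (k : ℕ) (S : Set V) : Prop :=
  ∀ v ∈ S, ({u ∈ S | G.Adj v u}).ncard ≤ k

/-- A set is `k`-dense in `G` if it is `k`-sparse in the complement of `G`. -/
def KDense {V : Type*} (G : SimpleGraph V) (k : ℕ) (S : Set V) : Prop :=
  KSparse Gᶜ k S

/-- `G` has a `k`-dense set of size `i`. -/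
def HasKDense {V : Type*} (G : SimpleGraph V) (k i : ℕ) : Prop :=
  ∃ D : Set V, D.ncard = i ∧ KDense G k D

/-- `G` has a `k`-sparse set of size `j`. -/
def HasKSparse {V : Type*} (G : SimpleGraph V) (k j : ℕ) : Prop :=
  ∃ S : Set V, S.ncard = j ∧ KSparse G k S

/-- A cactus: every edge lies on at most one cycle, i.e. any two cycles sharing
an edge have the same edge set. -/
def IsCactus {V : Type*} (G : SimpleGraph V) : Prop :=
  ∀ (u v : V) (c₁ : G.Walk u u) (c₂ : G.Walk v v), c₁.IsCycle → c₂.IsCycle →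
    (∃ e, e ∈ c₁.edges ∧ e ∈ c₂.edges) → (∀ e, e ∈ c₁.edges ↔ e ∈ c₂.edges)

/-- A split graph: the vertices partition into a clique and an independent set. -/
def IsSplit {V : Type*} (G : SimpleGraph V) : Prop :=
  ∃ K : Set V, G.IsClique K ∧ Gᶜ.IsClique Kᶜ

/-- A cograph: no induced path on four vertices. -/
def IsCograph {V : Type*} (G : SimpleGraph V) : Prop :=
  ¬ ∃ f : Fin 4 ↪ V, ∀ a b : Fin 4, G.Adj (f a) (f b) ↔ (SimpleGraph.pathGraph 4).Adj a b

/-- `⌈(k + 1) n / (k + 2)⌉`, written with truncating division. -/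
def kSparseBound (k n : ℕ) : ℕ := ((k + 1) * n + (k + 1)) / (k + 2)

lemma kSparseBound_le (k n : ℕ) : kSparseBound k n ≤ n :=
  Nat.lt_succ_iff.1 <| (Nat.div_lt_iff_lt_mul (by omega)).2 (by nlinarith)

lemma kSparseBound_add_le {k w : ℕ} (hw : k + 1 ≤ w) (m : ℕ) :
    kSparseBound k (m + (w + 1)) ≤ kSparseBound k m + w :=
  calc kSparseBound k (m + (w + 1))
      ≤ ((k + 1) * m + (k + 1) + (k + 2) * w) / (k + 2) := Nat.div_le_div_right (by nlinarith)
    _ = kSparseBound k m + w := Nat.add_mul_div_left _ _ (by omega)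

namespace SimpleGraph

variable {V : Type*} {G : SimpleGraph V} {k : ℕ} {a b u v w y : V}

lemma Walk.reachable_deleteIncidenceSet_of_notMem_support (p : G.Walk a b)
    (hv : v ∉ p.support) : (G.deleteIncidenceSet v).Reachable a b :=
  ⟨p.toDeleteEdges (G.incidenceSet v) fun e he hinc => by
    induction e using Sym2.ind with
    | _ x z =>
      rcases ((mk'_mem_incidenceSet_iff G).1 hinc).2 with rfl | rfl
      · exact hv (p.fst_mem_support_of_mem_edges he)
      · exact hv (p.snd_mem_support_of_mem_edges he)⟩

lemma ne_of_reachable_deleteIncidenceSet (h : (G.deleteIncidenceSet v).Reachable a b)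
    (ha : a ≠ v) : b ≠ v := by
  rintro rfl
  obtain ⟨p⟩ := h.symm
  cases p with
  | nil => exact ha rfl
  | cons hadj _ => exact (deleteIncidenceSet_adj.1 hadj).2.1 rfl

lemma IsAcyclic.eq_of_adj_of_reachable_deleteIncidenceSet (hG : G.IsAcyclic) (ha : G.Adj v a)
    (hb : G.Adj v b) (h : (G.deleteIncidenceSet v).Reachable a b) : a = b := by
  by_contra hab
  refine isAcyclic_iff_forall_adj_isBridge.1 hG ha ?_
  have hle : G.deleteIncidenceSet v ≤ G.deleteEdges {s(v, a)} := fun x z hxz => by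
    rw [deleteIncidenceSet_adj] at hxz
    rw [deleteEdges_adj]
    exact ⟨hxz.1, by simp [hxz.2.1, hxz.2.2]⟩
  have hvb : (G.deleteEdges {s(v, a)}).Adj v b := by
    rw [deleteEdges_adj]
    exact ⟨hb, by simp [Ne.symm hab, ha.ne]⟩
  exact hvb.reachable.trans (h.mono hle).symm

lemma dist_add_dist_le_of_forall_mem_support (hr : G.Reachable a b)
    (h : ∀ p : G.Walk a b, v ∈ p.support) : G.dist a v + G.dist v b ≤ G.dist a b := by
  classical
  obtain ⟨p, hp⟩ := hr.exists_walk_length_eq_dist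
  calc G.dist a v + G.dist v b
      ≤ (p.takeUntil v (h p)).length + (p.dropUntil v (h p)).length :=
        add_le_add (dist_le _) (dist_le _)
    _ = G.dist a b := by rw [← Walk.length_append, Walk.take_spec, hp]

/-- Otherwise `v` separates `w` from `u`, and then `dist u w > dist u v`. -/
lemma reachable_deleteIncidenceSet_of_forall_dist_le {D : Set V} (hv : v ∈ D) (hu : u ∈ D)
    (hmax : ∀ a ∈ D, ∀ b ∈ D, G.dist a b ≤ G.dist v u) (hw : w ∈ D) (hy : G.Adj v y)
    (hyw : (G.deleteIncidenceSet v).Reachable y w) :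
    (G.deleteIncidenceSet v).Reachable u w := by
  by_contra huw
  have hsep : ∀ p : G.Walk u w, v ∈ p.support := fun p => by
    by_contra hp
    exact huw (p.reachable_deleteIncidenceSet_of_notMem_support hp)
  have hvw : G.Reachable v w := hy.reachable.trans (hyw.mono (deleteIncidenceSet_le G v))
  have hpos : 0 < G.dist v w :=
    hvw.pos_dist_of_ne (ne_of_reachable_deleteIncidenceSet hyw hy.ne').symm
  have hvu : G.Reachable v u := Reachable.of_dist_ne_zero (by grind [hmax v hv w hw])
  have hsum := dist_add_dist_le_of_forall_mem_support (hvu.symm.trans hvw) hsep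
  have := hmax u hu w hw
  rw [dist_comm] at hsum
  omega

lemma IsAcyclic.subsingleton_adj_reachable_of_forall_dist_le (hG : G.IsAcyclic) {D : Set V}
    (hv : v ∈ D) (hu : u ∈ D) (hmax : ∀ a ∈ D, ∀ b ∈ D, G.dist a b ≤ G.dist v u) :
    {y | G.Adj v y ∧ ∃ w ∈ D, (G.deleteIncidenceSet v).Reachable y w}.Subsingleton := by
  rintro y₁ ⟨h₁, w₁, hw₁, hr₁⟩ y₂ ⟨h₂, w₂, hw₂, hr₂⟩
  have hu₁ := reachable_deleteIncidenceSet_of_forall_dist_le hv hu hmax hw₁ h₁ hr₁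
  have hu₂ := reachable_deleteIncidenceSet_of_forall_dist_le hv hu hmax hw₂ h₂ hr₂
  exact hG.eq_of_adj_of_reachable_deleteIncidenceSet h₁ h₂
    (hr₁.trans (hu₁.symm.trans hu₂) |>.trans hr₂.symm)

/-- The union of the components of `G - v` meeting `Y`; `v` itself is isolated in
`G.deleteIncidenceSet v`. -/
def branches (G : SimpleGraph V) (v : V) (Y : Set V) : Set V :=
  {z | ∃ y ∈ Y, (G.deleteIncidenceSet v).Reachable y z}

lemma subset_branches (Y : Set V) : Y ⊆ G.branches v Y := fun y hy => ⟨y, hy, .refl y⟩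

lemma ne_of_mem_branches {Y : Set V} (hY : v ∉ Y) {z : V} (hz : z ∈ G.branches v Y) :
    z ≠ v := by
  obtain ⟨y, hy, hyz⟩ := hz
  exact ne_of_reachable_deleteIncidenceSet hyz fun h => hY (h ▸ hy)

lemma neighborSet_subset_branches {Y : Set V} (hY : v ∉ Y) {z : V} (hz : z ∈ G.branches v Y) :
    G.neighborSet z ⊆ insert v (G.branches v Y) := by
  intro t hzt
  by_cases htv : t = v
  · exact .inl htv
  obtain ⟨y, hy, hyz⟩ := hz
  exact .inr ⟨y, hy, hyz.trans <| Adj.reachable <|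
    deleteIncidenceSet_adj.2 ⟨hzt, ne_of_mem_branches hY ⟨y, hy, hyz⟩, htv⟩⟩

lemma IsAcyclic.neighborSet_inter_branches (hG : G.IsAcyclic) {Y : Set V}
    (hY : Y ⊆ G.neighborSet v) : G.neighborSet v ∩ G.branches v Y = Y := by
  refine subset_antisymm ?_ fun y hy => ⟨hY hy, subset_branches Y hy⟩
  rintro t ⟨hvt, y, hy, hyt⟩
  exact hG.eq_of_adj_of_reachable_deleteIncidenceSet (hY hy) hvt hyt ▸ hy

lemma kSparse_of_forall_ncard_neighborSet_le [Finite V] {S : Set V}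
    (h : ∀ v ∈ S, (G.neighborSet v).ncard ≤ k) : KSparse G k S :=
  fun v hv => (Set.ncard_le_ncard fun _ hu => hu.2).trans (h v hv)

/-- `W` is the union of the branches at `v` free of vertices of degree `> k`, and `x = v`; if
there are only `k` such branches, `v` joins `W` and `x` is its neighbour in the remaining
branch. -/
lemma IsAcyclic.exists_pendant_kSparse_of_subsingleton [Finite V] (hG : G.IsAcyclic)
    (hv : k < (G.neighborSet v).ncard)
    (hbad : {y | G.Adj v y ∧ ∃ w ∈ {w | k < (G.neighborSet w).ncard},
      (G.deleteIncidenceSet v).Reachable y w}.Subsingleton) :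
    ∃ x W, x ∉ W ∧ k + 1 ≤ W.ncard ∧ KSparse G k W ∧
      ∀ z ∈ W, G.neighborSet z ⊆ insert x W := by
  set bad := {y | G.Adj v y ∧ ∃ w ∈ {w | k < (G.neighborSet w).ncard},
    (G.deleteIncidenceSet v).Reachable y w}
  set good := {y | G.Adj v y ∧
    ∀ w, (G.deleteIncidenceSet v).Reachable y w → (G.neighborSet w).ncard ≤ k}
  have hgoodN : good ⊆ G.neighborSet v := fun y hy => hy.1
  have hvgood : v ∉ good := fun h => G.loopless.irrefl v h.1
  have hlow : ∀ z ∈ G.branches v good, (G.neighborSet z).ncard ≤ k := by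
    rintro z ⟨y, hy, hyz⟩
    exact hy.2 z hyz
  by_cases hbig : k + 1 ≤ good.ncard
  · exact ⟨v, G.branches v good, fun h => ne_of_mem_branches hvgood h rfl,
      hbig.trans (Set.ncard_le_ncard (subset_branches good)),
      kSparse_of_forall_ncard_neighborSet_le hlow,
      fun z hz => neighborSet_subset_branches hvgood hz⟩
  obtain ⟨p, hvp, hpgood⟩ : ∃ p, G.Adj v p ∧ p ∉ good := by
    by_contra! h
    exact hbig ((Set.ncard_le_ncard h).trans' hv)
  have hbad_of_not_good : ∀ y, G.Adj v y → y ∉ good → y ∈ bad := by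
    intro y hvy hy
    obtain ⟨w, hyw, hw⟩ :
        ∃ w, (G.deleteIncidenceSet v).Reachable y w ∧ k < (G.neighborSet w).ncard := by
      simpa [good, hvy] using hy
    exact ⟨hvy, w, hw, hyw⟩
  have hN : G.neighborSet v ⊆ insert p good := fun t hvt => by
    by_cases ht : t ∈ good
    · exact .inr ht
    · exact .inl (hbad (hbad_of_not_good t hvt ht) (hbad_of_not_good p hvp hpgood))
  have hpW : p ∉ G.branches v good := fun h =>
    hpgood (hG.neighborSet_inter_branches hgoodN ▸ ⟨hvp, h⟩)
  have hvW : v ∉ G.branches v good := fun h => ne_of_mem_branches hvgood h rfl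
  refine ⟨p, insert v (G.branches v good), ?_, ?_, ?_, ?_⟩
  · rintro (h | h)
    exacts [hvp.ne' h, hpW h]
  · have := (Set.ncard_le_ncard hN).trans (Set.ncard_insert_le p good)
    rw [Set.ncard_insert_of_notMem hvW]
    have := Set.ncard_le_ncard (subset_branches (G := G) (v := v) good)
    omega
  · rintro z (rfl | hz)
    · calc {t ∈ insert z (G.branches z good) | G.Adj z t}.ncard
          ≤ (G.neighborSet z ∩ G.branches z good).ncard := by
            refine Set.ncard_le_ncard ?_
            rintro t ⟨rfl | ht, hzt⟩
            exacts [(G.loopless.irrefl _ hzt).elim, ⟨hzt, ht⟩]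
        _ ≤ k := by
            rw [hG.neighborSet_inter_branches hgoodN]
            omega
    · exact (Set.ncard_le_ncard fun _ ht => ht.2).trans (hlow z hz)
  · rintro z (rfl | hz)
    · exact hN.trans <|
        Set.insert_subset_insert ((subset_branches good).trans (Set.subset_insert _ _))
    · exact (neighborSet_subset_branches hvgood hz).trans (Set.subset_insert _ _)

lemma IsAcyclic.exists_pendant_kSparse [Finite V] (hG : G.IsAcyclic)
    (hdeg : ∃ v, k < (G.neighborSet v).ncard) :
    ∃ x W, x ∉ W ∧ k + 1 ≤ W.ncard ∧ KSparse G k W ∧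
      ∀ z ∈ W, G.neighborSet z ⊆ insert x W := by
  set D := {w | k < (G.neighborSet w).ncard}
  obtain ⟨v₀, hv₀⟩ := hdeg
  obtain ⟨⟨v, u⟩, ⟨hv, hu⟩, hmax⟩ := (Set.toFinite (D ×ˢ D)).exists_maximalFor
    (fun p => G.dist p.1 p.2) _ ⟨(v₀, v₀), hv₀, hv₀⟩
  have hmax' : ∀ a ∈ D, ∀ b ∈ D, G.dist a b ≤ G.dist v u := fun a ha b hb =>
    (le_total _ _).elim id fun h => hmax (j := (a, b)) ⟨ha, hb⟩ h
  exact hG.exists_pendant_kSparse_of_subsingleton hv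
    (hG.subsingleton_adj_reachable_of_forall_dist_le hv hu hmax')

lemma KSparse.union_image_val [Finite V] {W : Set V} {x : V} (hW : KSparse G k W)
    (hWx : ∀ z ∈ W, G.neighborSet z ⊆ insert x W) {S : Set ↥(insert x W)ᶜ}
    (hS : KSparse (G.induce (insert x W)ᶜ) k S) : KSparse G k (W ∪ Subtype.val '' S) := by
  have hSW : ∀ t ∈ Subtype.val '' S, t ∉ insert x W := by
    rintro _ ⟨t, -, rfl⟩
    exact t.2
  rintro z (hz | ⟨z, hz, rfl⟩)
  · refine (Set.ncard_le_ncard ?_).trans (hW z hz)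
    rintro t ⟨ht | ht, hzt⟩
    · exact ⟨ht, hzt⟩
    · exact absurd (hWx z hz hzt) (hSW t ht)
  · calc {t ∈ W ∪ Subtype.val '' S | G.Adj z t}.ncard
        ≤ (Subtype.val '' {t ∈ S | (G.induce (insert x W)ᶜ).Adj z t}).ncard := by
          refine Set.ncard_le_ncard ?_
          rintro t ⟨ht | ⟨t, ht, rfl⟩, hzt⟩
          · exact absurd (hWx t ht hzt.symm) z.2
          · exact ⟨t, ⟨ht, hzt⟩, rfl⟩
      _ = {t ∈ S | (G.induce (insert x W)ᶜ).Adj z t}.ncard :=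
          Set.ncard_image_of_injective _ Subtype.val_injective
      _ ≤ k := hS z hz

theorem IsAcyclic.exists_kSparse_kSparseBound_le [Finite V] (hG : G.IsAcyclic) (k : ℕ) :
    ∃ S, KSparse G k S ∧ kSparseBound k (Nat.card V) ≤ S.ncard := by
  induction h : Nat.card V using Nat.strong_induction_on generalizing V with
  | _ n ih =>
  by_cases hdeg : ∃ v, k < (G.neighborSet v).ncard
  swap
  · push Not at hdeg
    refine ⟨Set.univ, kSparse_of_forall_ncard_neighborSet_le fun v _ => hdeg v, ?_⟩
    rw [Set.ncard_univ, h]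
    exact kSparseBound_le k n
  obtain ⟨x, W, hxW, hW, hWs, hWx⟩ := hG.exists_pendant_kSparse hdeg
  have hA : Nat.card ↥(insert x W)ᶜ + (W.ncard + 1) = n := by
    rw [Nat.card_coe_set_eq, ← Set.ncard_insert_of_notMem hxW, add_comm,
      Set.ncard_add_ncard_compl, h]
  obtain ⟨S, hS, hSn⟩ := ih (Nat.card ↥(insert x W)ᶜ) (by omega) (hG.induce _) rfl
  have hdisj : Disjoint W (Subtype.val '' S) := Set.disjoint_right.2 <| by
    rintro _ ⟨t, -, rfl⟩ htW
    exact t.2 (.inr htW)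
  refine ⟨W ∪ Subtype.val '' S, hWs.union_image_val hWx hS, ?_⟩
  rw [Set.ncard_union_eq hdisj, Set.ncard_image_of_injective _ Subtype.val_injective, ← hA]
  exact (kSparseBound_add_le hW _).trans (by omega)

end SimpleGraph

theorem stmt3 {V : Type*} [Fintype V] (F : SimpleGraph V) (k : ℕ)
    (hforest : F.IsAcyclic) :
    ∃ S : Set V, KSparse F k S ∧
      ((k + 1) * Fintype.card V + (k + 1)) / (k + 2) ≤ S.ncard := by
  rw [← Nat.card_eq_fintype_card]
  exact hforest.exists_kSparse_kSparseBound_le k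
end

section
/- For all k ≥ 1, i ≥ k+3 and j ≥ k+2, the k-defective Ramsey number for forests satisfies R_k^FO(i,j) = j + ⌊(j−1)/(k+1)⌋. That is: every forest on j + ⌊(j−1)/(k+1)⌋ vertices contains a k-sparse set of size j, and there exists a forest on j + ⌊(j−1)/(k+1)⌋ − 1 vertices with no k-dense i-set and no k-sparse j-set. -/
open SimpleGraph

set_option linter.unusedSectionVars false

section Forest

variable {V : Type*} [DecidableEq V] (G : SimpleGraph V) [DecidableRel G.Adj]

/-- Reachability within a vertex set `A`. -/
def ReachIn (A : Finset V) (u v : V) : Prop :=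
  ∃ w : G.Walk u v, ∀ x ∈ w.support, x ∈ A

/-- Number of neighbors of `v` inside `A`. -/
def degIn (A : Finset V) (v : V) : ℕ := (A.filter (fun u => G.Adj v u)).card

variable {G}

lemma ReachIn.mono {A B : Finset V} (hAB : A ⊆ B) {u v : V} (h : ReachIn G A u v) :
    ReachIn G B u v := by
  obtain ⟨w, hw⟩ := h
  exact ⟨w, fun x hx => hAB (hw x hx)⟩

lemma ReachIn.symm {A : Finset V} {u v : V} (h : ReachIn G A u v) : ReachIn G A v u := by
  obtain ⟨w, hw⟩ := h
  exact ⟨w.reverse, fun x hx => hw x (by rwa [SimpleGraph.Walk.support_reverse, List.mem_reverse] at hx)⟩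

lemma ReachIn.trans {A : Finset V} {u v x : V} (h : ReachIn G A u v) (h' : ReachIn G A v x) :
    ReachIn G A u x := by
  obtain ⟨w, hw⟩ := h
  obtain ⟨w', hw'⟩ := h'
  refine ⟨w.append w', fun y hy => ?_⟩
  rw [SimpleGraph.Walk.mem_support_append_iff] at hy
  rcases hy with hy | hy
  · exact hw y hy
  · exact hw' y hy

lemma reachIn_adj {A : Finset V} {u v : V} (h : G.Adj u v) (hu : u ∈ A) (hv : v ∈ A) :
    ReachIn G A u v :=
  ⟨SimpleGraph.Walk.cons h SimpleGraph.Walk.nil, by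
    intro x hx
    simp only [SimpleGraph.Walk.support_cons, SimpleGraph.Walk.support_nil,
      List.mem_cons, List.mem_singleton] at hx
    rcases hx with rfl | hx
    · exact hu
    · simp only [List.not_mem_nil, or_false] at hx
      subst hx; exact hv⟩

lemma degIn_insert {B : Finset V} {r : V} (hr : r ∉ B) (v : V) :
    degIn G (insert r B) v = degIn G B v + if G.Adj v r then 1 else 0 := by
  unfold degIn
  rw [Finset.filter_insert]
  split
  · rw [Finset.card_insert_of_notMem (fun hc => hr (Finset.mem_of_mem_filter _ hc))]
  · rw [Nat.add_zero]

/-- Main deletion lemma for forests: one can delete few vertices from any set `A`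
so that the induced degrees become at most `k`, with a budget accounting on a set
of roots `R` that are pairwise unreachable inside `A`. -/
lemma sparse_delete (k : ℕ) (hG : G.IsAcyclic) (A : Finset V) :
    ∀ R : Finset V, R ⊆ A →
      (∀ r₁ ∈ R, ∀ r₂ ∈ R, r₁ ≠ r₂ → ¬ ReachIn G A r₁ r₂) →
      ∃ D ⊆ A, (∀ v ∈ A \ D, degIn G (A \ D) v ≤ k) ∧
        (k+2) * D.card + ∑ x ∈ R \ D, (1 + degIn G (A \ D) x) ≤ A.card := by
  induction A using Finset.strongInduction with
  | _ A ih =>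
    have step : ∀ r ∈ A, ∀ R ⊆ A, r ∈ R →
        (∀ r₁ ∈ R, ∀ r₂ ∈ R, r₁ ≠ r₂ → ¬ ReachIn G A r₁ r₂) →
        ∃ D ⊆ A, (∀ v ∈ A \ D, degIn G (A \ D) v ≤ k) ∧
          (k+2) * D.card + ∑ x ∈ R \ D, (1 + degIn G (A \ D) x) ≤ A.card := by
      intro r hrA R hRA hrR hsep
      set A' := A.erase r with hA'def
      set N := A'.filter (fun c => G.Adj r c) with hNdef
      have hNA' : N ⊆ A' := Finset.filter_subset _ _
      have hrA' : r ∉ A' := Finset.notMem_erase r A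
      have hA'A : A' ⊆ A := Finset.erase_subset r A
      -- roots in R other than r are not adjacent to r and not in N
      have hRadj : ∀ x ∈ R, x ≠ r → ¬ G.Adj r x := by
        intro x hx hxr hadj
        exact hsep r hrR x hx (Ne.symm hxr) (reachIn_adj hadj hrA (hRA hx))
      have hdisj : Disjoint (R.erase r) N := by
        rw [Finset.disjoint_left]
        intro x hx hxN
        rw [Finset.mem_erase] at hx
        rw [hNdef, Finset.mem_filter] at hxN
        exact hRadj x hx.2 hx.1 hxN.2
      -- the new root set
      set R' := (R.erase r) ∪ N with hR'def
      have hR'A' : R' ⊆ A' := by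
        rw [hR'def]
        apply Finset.union_subset _ hNA'
        intro x hx
        rw [Finset.mem_erase] at hx
        rw [hA'def, Finset.mem_erase]
        exact ⟨hx.1, hRA hx.2⟩
      -- pairwise unreachability in A'
      have hsep' : ∀ x ∈ R', ∀ y ∈ R', x ≠ y → ¬ ReachIn G A' x y := by
        intro x hx y hy hxy hreach
        rw [hR'def, Finset.mem_union] at hx hy
        have hReach : ∀ z ∈ R.erase r, ReachIn G A z r → False := by
          intro z hz hr
          rw [Finset.mem_erase] at hz
          exact hsep z hz.2 r hrR hz.1 hr
        rcases hx with hx | hx <;> rcases hy with hy | hy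
        · rw [Finset.mem_erase] at hx hy
          exact hsep x hx.2 y hy.2 hxy (hreach.mono hA'A)
        · -- x old root, y new child
          rw [hNdef, Finset.mem_filter] at hy
          exact hReach x hx ((hreach.mono hA'A).trans
            (reachIn_adj hy.2 hrA (hA'A hy.1)).symm)
        · rw [hNdef, Finset.mem_filter] at hx
          exact hReach y hy ((hreach.mono hA'A).symm.trans
            (reachIn_adj hx.2 hrA (hA'A hx.1)).symm)
        · -- two children of r: would close a cycle
          rw [hNdef, Finset.mem_filter] at hx hy
          obtain ⟨w, hw⟩ := hreach
          set p := w.toPath with hpdef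
          have hps : ∀ z ∈ (p : G.Walk x y).support, z ∈ A' := fun z hz =>
            hw z (SimpleGraph.Walk.support_toPath_subset w hz)
          have hrp : r ∉ (p : G.Walk x y).support := fun hc => hrA' (hps r hc)
          have hP2 : (SimpleGraph.Walk.cons hx.2 (p : G.Walk x y)).IsPath := by
            rw [SimpleGraph.Walk.cons_isPath_iff]
            exact ⟨p.2, hrp⟩
          have := hG.path_unique (SimpleGraph.Path.singleton hy.2) ⟨_, hP2⟩
          have hlen : (SimpleGraph.Path.singleton hy.2 : G.Walk r y).length
              = (SimpleGraph.Walk.cons hx.2 (p : G.Walk x y)).length := by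
            rw [this]
          simp only [SimpleGraph.Path.singleton, SimpleGraph.Walk.length_cons,
            SimpleGraph.Walk.length_nil] at hlen
          have : (p : G.Walk x y).length = 0 := by omega
          exact hxy (SimpleGraph.Walk.eq_of_length_eq_zero this)
      obtain ⟨D', hD'A', hdeg', hbud'⟩ := ih A' (Finset.erase_ssubset hrA) R' hR'A' hsep'
      have hrD' : r ∉ D' := fun hc => hrA' (hD'A' hc)
      -- split the budget sum
      have hsplit : R' \ D' = (R.erase r \ D') ∪ (N \ D') := by
        rw [hR'def, Finset.union_sdiff_distrib]
      have hdisj2 : Disjoint (R.erase r \ D') (N \ D') :=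
        hdisj.mono (Finset.sdiff_subset) (Finset.sdiff_subset)
      rw [hsplit, Finset.sum_union hdisj2] at hbud'
      set sS := ∑ x ∈ N \ D', (1 + degIn G (A' \ D') x) with hsS
      set s1 := ∑ x ∈ R.erase r \ D', (1 + degIn G (A' \ D') x) with hs1
      have hcardA : A'.card + 1 = A.card := Finset.card_erase_add_one hrA
      by_cases hcase : k + 1 ≤ sS
      · -- delete r
        have hAD : A \ insert r D' = A' \ D' := by
          ext x
          simp only [Finset.mem_sdiff, Finset.mem_insert, hA'def, Finset.mem_erase]
          tauto
        refine ⟨insert r D', ?_, ?_, ?_⟩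
        · exact Finset.insert_subset hrA (hD'A'.trans hA'A)
        · rw [hAD]; exact hdeg'
        · rw [hAD]
          have hRD : R \ insert r D' = R.erase r \ D' := by
            ext x
            simp only [Finset.mem_sdiff, Finset.mem_insert, Finset.mem_erase]
            tauto
          rw [hRD, Finset.card_insert_of_notMem hrD']
          have : (k+2) * (D'.card + 1) = (k+2) * D'.card + (k + 2) := by ring
          omega
      · -- keep r
        push_neg at hcase
        have hAD : A \ D' = insert r (A' \ D') := by
          ext x
          simp only [Finset.mem_sdiff, Finset.mem_insert, hA'def, Finset.mem_erase]
          constructor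
          · rintro ⟨hxA, hxD⟩
            by_cases hxr : x = r
            · exact Or.inl hxr
            · exact Or.inr ⟨⟨hxr, hxA⟩, hxD⟩
          · rintro (rfl | ⟨⟨hxr, hxA⟩, hxD⟩)
            · exact ⟨hrA, hrD'⟩
            · exact ⟨hxA, hxD⟩
        have hrAD' : r ∉ A' \ D' := fun hc => hrA' (Finset.mem_sdiff.mp hc).1
        -- neighbors of r in A' \ D' are exactly N \ D'
        have hNS : (A' \ D').filter (fun u => G.Adj r u) = N \ D' := by
          rw [hNdef]
          ext x
          simp only [Finset.mem_filter, Finset.mem_sdiff]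
          tauto
        have hdegr : degIn G (A \ D') r = (N \ D').card := by
          rw [hAD, degIn_insert hrAD' r]
          simp only [G.irrefl, if_false]
          unfold degIn
          rw [hNS, Nat.add_zero]
        have hcardS : (N \ D').card ≤ sS := by
          rw [hsS]
          calc (N \ D').card = ∑ _x ∈ N \ D', 1 := by rw [Finset.sum_const, smul_eq_mul, mul_one]
          _ ≤ sS := Finset.sum_le_sum (fun i _ => by omega)
        refine ⟨D', hD'A'.trans hA'A, ?_, ?_⟩
        · intro v hv
          rw [hAD] at hv ⊢
          rcases Finset.mem_insert.mp hv with rfl | hv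
          · rw [degIn_insert hrAD' v]
            simp only [G.irrefl, if_false]
            have : degIn G (A' \ D') v = (N \ D').card := by
              unfold degIn; rw [hNS]
            omega
          · rw [degIn_insert hrAD' v]
            by_cases hadj : G.Adj v r
            · have hvN : v ∈ N \ D' := by
                rw [Finset.mem_sdiff, hNdef, Finset.mem_filter]
                rw [Finset.mem_sdiff] at hv
                exact ⟨⟨hv.1, hadj.symm⟩, hv.2⟩
              have hle : 1 + degIn G (A' \ D') v ≤ sS := by
                rw [hsS]
                exact Finset.single_le_sum (f := fun x => 1 + degIn G (A' \ D') x)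
                  (fun i _ => Nat.zero_le _) hvN
              simp only [hadj, if_true]
              omega
            · simp only [hadj, if_false]
              have := hdeg' v hv
              omega
        · -- budget
          have hRD : R \ D' = insert r (R.erase r \ D') := by
            ext x
            simp only [Finset.mem_sdiff, Finset.mem_insert, Finset.mem_erase]
            constructor
            · rintro ⟨hxR, hxD⟩
              by_cases hxr : x = r
              · exact Or.inl hxr
              · exact Or.inr ⟨⟨hxr, hxR⟩, hxD⟩
            · rintro (rfl | ⟨⟨hxr, hxR⟩, hxD⟩)
              · exact ⟨hrR, hrD'⟩
              · exact ⟨hxR, hxD⟩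
          have hrnotin : r ∉ R.erase r \ D' := fun hc =>
            (Finset.mem_erase.mp (Finset.mem_sdiff.mp hc).1).1 rfl
          rw [hRD, Finset.sum_insert hrnotin]
          -- degrees of old roots are unchanged
          have hsum_eq : ∑ x ∈ R.erase r \ D', (1 + degIn G (A \ D') x) = s1 := by
            rw [hs1]
            apply Finset.sum_congr rfl
            intro x hx
            have hxe := Finset.mem_sdiff.mp hx
            have hnadj : ¬ G.Adj x r := by
              intro hadj
              exact hRadj x (Finset.mem_of_mem_erase hxe.1)
                (Finset.mem_erase.mp hxe.1).1 hadj.symm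
            rw [hAD, degIn_insert hrAD' x]
            simp only [hnadj, if_false, Nat.add_zero]
          rw [hsum_eq, hdegr]
          omega
    intro R hRA hsep
    rcases R.eq_empty_or_nonempty with rfl | ⟨r, hr⟩
    · rcases A.eq_empty_or_nonempty with rfl | ⟨a, ha⟩
      · exact ⟨∅, by simp⟩
      · obtain ⟨D, hDA, hdeg, hbud⟩ := step a ha {a} (Finset.singleton_subset_iff.mpr ha)
          (Finset.mem_singleton_self a)
          (by intro r₁ h1 r₂ h2 hne; rw [Finset.mem_singleton] at h1 h2; subst h1; subst h2; simp at hne)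
        refine ⟨D, hDA, hdeg, ?_⟩
        have : (¬∅ \ D = ∅) → False := by intro h; exact h (Finset.empty_sdiff D)
        rw [Finset.empty_sdiff, Finset.sum_empty]
        have hle : (k+2) * D.card ≤ (k+2) * D.card + ∑ x ∈ {a} \ D, (1 + degIn G (A \ D) x) :=
          Nat.le_add_right _ _
        exact hle.trans hbud
    · exact step r (hRA hr) R hRA hr hsep

end Forest


section Star

/-- helper: characterization of division -/
lemma div_char (K x b : ℕ) (hK : 0 < K) : x / K = b ↔ b * K ≤ x ∧ x < b * K + K := by
  constructor
  · intro h
    have h1 := Nat.div_add_mod x K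
    have h2 := Nat.mod_lt x hK
    rw [h] at h1
    have h3 : K * b = b * K := Nat.mul_comm _ _
    omega
  · rintro ⟨h1, h2⟩
    exact Nat.div_eq_of_lt_le h1 (by rw [Nat.succ_mul]; omega)

/-- The disjoint union of `q` stars `K_{1,k+1}` together with some isolated vertices. -/
def starForest (k q m : ℕ) : SimpleGraph (Fin m) where
  Adj a b := a ≠ b ∧ a.val / (k+2) = b.val / (k+2) ∧ a.val < q*(k+2) ∧ b.val < q*(k+2) ∧
    (a.val % (k+2) = 0 ∨ b.val % (k+2) = 0)
  symm := by
    refine ⟨?_⟩; rintro a b ⟨h1, h2, h3, h4, h5⟩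
    exact ⟨h1.symm, h2.symm, h4, h3, h5.symm⟩
  loopless := by refine ⟨?_⟩; rintro a ⟨h1, -⟩; exact h1 rfl

lemma starForest_eq_center {k q m : ℕ} {a b : Fin m} (h : (starForest k q m).Adj a b)
    (ha : a.val % (k+2) ≠ 0) : b.val = (k+2) * (a.val / (k+2)) := by
  obtain ⟨h1, h2, h3, h4, h5⟩ := h
  have hb : b.val % (k+2) = 0 := by tauto
  have hb2 := Nat.div_add_mod b.val (k+2)
  rw [← h2] at hb2
  omega

lemma starForest_no_reach {k q m : ℕ} {v w : Fin m} (h : (starForest k q m).Adj v w)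
    (hw : w.val % (k+2) ≠ 0) :
    ¬ ((starForest k q m) \ fromEdgeSet {s(v, w)}).Reachable v w := by
  intro hreach
  obtain ⟨p⟩ := hreach.symm
  cases p with
  | nil => exact (starForest k q m).loopless.irrefl _ h
  | @cons _ x _ h' p' =>
    rw [SimpleGraph.sdiff_adj] at h'
    obtain ⟨hwx, hne⟩ := h'
    have hx : x = v := by
      apply Fin.ext
      rw [starForest_eq_center hwx hw, ← starForest_eq_center h.symm hw]
    subst hx
    apply hne
    rw [SimpleGraph.fromEdgeSet_adj]
    exact ⟨by rw [Sym2.eq_swap]; exact Set.mem_singleton _, hwx.ne⟩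

lemma starForest_isAcyclic (k q m : ℕ) : (starForest k q m).IsAcyclic := by
  rw [isAcyclic_iff_forall_adj_isBridge]
  intro v w hvw
  rw [isBridge_iff]
  by_cases hw : w.val % (k+2) = 0
  · have hv : v.val % (k+2) ≠ 0 := by
      intro hv
      obtain ⟨h1, h2, h3, h4, h5⟩ := hvw
      have hb2 := Nat.div_add_mod v.val (k+2)
      have hb3 := Nat.div_add_mod w.val (k+2)
      rw [h2] at hb2
      exact h1 (Fin.ext (by omega))
    have hthis := starForest_no_reach hvw.symm hv
    intro hr
    rw [Sym2.eq_swap] at hr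
    exact hthis hr.symm
  · exact starForest_no_reach hvw hw

lemma starBlock_card {k q t m : ℕ} (hm : m = q*(k+2) + t) (ht : t < k+2) {b : ℕ} (hb : b < q) :
    (Finset.univ.filter (fun x : Fin m => x.val/(k+2) = b)).card = k+2 := by
  have hle : b*(k+2) + (k+2) ≤ q*(k+2) := by
    have : (b+1)*(k+2) ≤ q*(k+2) := Nat.mul_le_mul_right _ (by omega)
    have h2 : (b+1)*(k+2) = b*(k+2) + (k+2) := by ring
    omega
  have := Finset.card_bij' (s := Finset.univ.filter (fun x : Fin m => x.val/(k+2) = b))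
    (t := Finset.Ico (b*(k+2)) (b*(k+2)+(k+2)))
    (fun x _ => x.val)
    (fun n hn => ⟨n, by rw [Finset.mem_Ico] at hn; omega⟩)
    (fun x hx => by
      rw [Finset.mem_filter] at hx
      rw [Finset.mem_Ico]
      exact (div_char (k+2) x.val b (by omega)).mp hx.2)
    (fun n hn => by
      rw [Finset.mem_Ico] at hn
      rw [Finset.mem_filter]
      exact ⟨Finset.mem_univ _, (div_char (k+2) n b (by omega)).mpr hn⟩)
    (fun x hx => rfl)
    (fun n hn => rfl)
  rw [this, Nat.card_Ico]
  omega

lemma starBlockQ_card {k q t m : ℕ} (hm : m = q*(k+2) + t) (ht : t < k+2) :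
    (Finset.univ.filter (fun x : Fin m => x.val/(k+2) = q)).card = t := by
  have := Finset.card_bij' (s := Finset.univ.filter (fun x : Fin m => x.val/(k+2) = q))
    (t := Finset.Ico (q*(k+2)) (q*(k+2)+t))
    (fun x _ => x.val)
    (fun n hn => ⟨n, by rw [Finset.mem_Ico] at hn; omega⟩)
    (fun x hx => by
      rw [Finset.mem_filter] at hx
      show x.val ∈ Finset.Ico (q*(k+2)) (q*(k+2)+t)
      rw [Finset.mem_Ico]
      have := (div_char (k+2) x.val q (by omega)).mp hx.2
      have hxm := x.isLt
      omega)
    (fun n hn => by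
      rw [Finset.mem_Ico] at hn
      rw [Finset.mem_filter]
      exact ⟨Finset.mem_univ _, (div_char (k+2) n q (by omega)).mpr (by omega)⟩)
    (fun x hx => rfl)
    (fun n hn => rfl)
  rw [this, Nat.card_Ico]
  omega

lemma starForest_no_sparse {k q t m j : ℕ} (hm : m = q*(k+2) + t) (ht : t < k+2)
    (hj : j = q*(k+1) + t + 1) : ¬ HasKSparse (starForest k q m) k j := by
  classical
  rintro ⟨S, hS, hsp⟩
  set T := S.toFinset with hTdef
  have hT : T.card = j := by rw [hTdef, ← Set.ncard_eq_toFinset_card']; exact hS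
  have h1 : ∀ x ∈ T, x.val / (k+2) ∈ Finset.range (q+1) := by
    intro x _
    rw [Finset.mem_range]
    rw [Nat.div_lt_iff_lt_mul (by omega : 0 < k+2)]
    have hxm := x.isLt
    have : (q+1)*(k+2) = q*(k+2) + (k+2) := by ring
    omega
  have hsum := Finset.card_eq_sum_card_fiberwise h1
  -- each star block contributes at most k+1
  have hfib : ∀ b < q, (T.filter (fun x => x.val/(k+2) = b)).card ≤ k+1 := by
    intro b hb
    by_contra hc
    push_neg at hc
    have hsub : T.filter (fun x => x.val/(k+2) = b) ⊆
        Finset.univ.filter (fun x : Fin m => x.val/(k+2) = b) := by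
      intro x hx
      rw [Finset.mem_filter] at hx ⊢
      exact ⟨Finset.mem_univ _, hx.2⟩
    have heq : Finset.univ.filter (fun x : Fin m => x.val/(k+2) = b)
        = T.filter (fun x => x.val/(k+2) = b) := by
      apply (Finset.eq_of_subset_of_card_le hsub ?_).symm
      rw [starBlock_card hm ht hb]
      omega
    -- the center of block b
    have hle : b*(k+2) + (k+2) ≤ q*(k+2) := by
      have : (b+1)*(k+2) ≤ q*(k+2) := Nat.mul_le_mul_right _ (by omega)
      have h2 : (b+1)*(k+2) = b*(k+2) + (k+2) := by ring
      omega
    set c : Fin m := ⟨b*(k+2), by omega⟩ with hcdef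
    have hcval : c.val = b*(k+2) := rfl
    have hcdiv0 : (b*(k+2)) / (k+2) = b :=
      (div_char (k+2) _ b (by omega)).mpr ⟨le_refl _, by omega⟩
    have hcdiv : c.val / (k+2) = b := hcdiv0
    have hcT : c ∈ T := by
      have hmem : c ∈ Finset.univ.filter (fun x : Fin m => x.val/(k+2) = b) := by
        rw [Finset.mem_filter]; exact ⟨Finset.mem_univ _, hcdiv⟩
      rw [heq] at hmem
      exact Finset.mem_of_mem_filter _ hmem
    have hcS : c ∈ S := Set.mem_toFinset.mp hcT
    -- all other block members are adjacent to the center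
    have hBsub : ↑((Finset.univ.filter (fun x : Fin m => x.val/(k+2) = b)).erase c)
        ⊆ {u ∈ S | (starForest k q m).Adj c u} := by
      intro u hu
      obtain ⟨hne, huB⟩ := Finset.mem_erase.mp (Finset.mem_coe.mp hu)
      have hudiv : u.val/(k+2) = b := (Finset.mem_filter.mp huB).2
      have huT : u ∈ T := by
        rw [heq] at huB
        exact Finset.mem_of_mem_filter _ huB
      have hub := (div_char (k+2) u.val b (by omega)).mp hudiv
      refine ⟨Set.mem_toFinset.mp huT, Ne.symm hne, hcdiv.trans hudiv.symm, ?_, ?_, Or.inl ?_⟩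
      · rw [hcval]; omega
      · omega
      · rw [hcval]; exact Nat.mul_mod_left b (k+2)
    have hk1 : k + 1 ≤ ({u ∈ S | (starForest k q m).Adj c u}).ncard := by
      have hcmem : c ∈ Finset.univ.filter (fun x : Fin m => x.val/(k+2) = b) := by
        rw [Finset.mem_filter]; exact ⟨Finset.mem_univ _, hcdiv⟩
      have hcard : ((Finset.univ.filter (fun x : Fin m => x.val/(k+2) = b)).erase c).card
          = k + 1 := by
        rw [Finset.card_erase_of_mem hcmem, starBlock_card hm ht hb]
        omega
      calc k + 1 = ((Finset.univ.filter (fun x : Fin m => x.val/(k+2) = b)).erase c).card := hcard.symm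
        _ = (↑((Finset.univ.filter (fun x : Fin m => x.val/(k+2) = b)).erase c) : Set (Fin m)).ncard := (Set.ncard_coe_finset _).symm
        _ ≤ _ := Set.ncard_le_ncard hBsub (Set.toFinite _)
    have := hsp c hcS
    omega
  have hfibq : (T.filter (fun x => x.val/(k+2) = q)).card ≤ t := by
    rw [← starBlockQ_card hm ht]
    apply Finset.card_le_card
    intro x hx
    rw [Finset.mem_filter] at hx ⊢
    exact ⟨Finset.mem_univ _, hx.2⟩
  rw [Finset.sum_range_succ] at hsum
  have hsum2 : ∑ b ∈ Finset.range q, (T.filter (fun x => x.val/(k+2) = b)).card ≤ q * (k+1) := by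
    calc ∑ b ∈ Finset.range q, (T.filter (fun x => x.val/(k+2) = b)).card
        ≤ ∑ b ∈ Finset.range q, (k+1) :=
          Finset.sum_le_sum (fun b hb => hfib b (Finset.mem_range.mp hb))
      _ = q * (k+1) := by rw [Finset.sum_const, Finset.card_range, smul_eq_mul]
  omega

lemma starForest_no_dense {k q m i : ℕ} (hk : 1 ≤ k) (hi : k + 3 ≤ i) :
    ¬ HasKDense (starForest k q m) k i := by
  rintro ⟨D, hD, hdense⟩
  have hnbr : ∀ v ∈ D, 1 < ({u ∈ D | (starForest k q m).Adj v u}).ncard := by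
    intro v hv
    have h1 := hdense v hv
    have hsub : D ⊆ ({v} : Set (Fin m)) ∪ {u ∈ D | (starForest k q m)ᶜ.Adj v u}
        ∪ {u ∈ D | (starForest k q m).Adj v u} := by
      intro u hu
      by_cases huv : u = v
      · exact Or.inl (Or.inl huv)
      · by_cases hadj : (starForest k q m).Adj v u
        · exact Or.inr ⟨hu, hadj⟩
        · exact Or.inl (Or.inr ⟨hu, (compl_adj _ v u).mpr ⟨Ne.symm huv, hadj⟩⟩)
    have hle := Set.ncard_le_ncard hsub (Set.toFinite _)
    have h2 := Set.ncard_union_le (({v} : Set (Fin m)) ∪ {u ∈ D | (starForest k q m)ᶜ.Adj v u})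
      {u ∈ D | (starForest k q m).Adj v u}
    have h3 := Set.ncard_union_le ({v} : Set (Fin m)) {u ∈ D | (starForest k q m)ᶜ.Adj v u}
    have h4 : ({v} : Set (Fin m)).ncard = 1 := Set.ncard_singleton v
    omega
  have hDne : D.Nonempty := Set.nonempty_of_ncard_ne_zero (by omega)
  have hcent : ∀ v ∈ D, v.val % (k+2) = 0 := by
    intro v hv
    by_contra hvc
    obtain ⟨a, ha, b, hb, hab⟩ := (Set.one_lt_ncard (Set.toFinite _)).mp (hnbr v hv)
    apply hab
    apply Fin.ext
    rw [starForest_eq_center ha.2 hvc, starForest_eq_center hb.2 hvc]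
  obtain ⟨v, hv⟩ := hDne
  obtain ⟨a, ha, b, hb, hab⟩ := (Set.one_lt_ncard (Set.toFinite _)).mp (hnbr v hv)
  obtain ⟨h1, h2, h3, h4, h5⟩ := ha.2
  have hva := hcent v hv
  have hca := hcent a ha.1
  have hb2 := Nat.div_add_mod v.val (k+2)
  have hb3 := Nat.div_add_mod a.val (k+2)
  rw [h2] at hb2
  exact h1 (Fin.ext (by omega))

end Star


theorem stmt4 (k i j : ℕ) (hk : 1 ≤ k) (hi : k + 3 ≤ i) (hj : k + 2 ≤ j) :
    (∀ G : SimpleGraph (Fin (j + (j - 1) / (k + 1))),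
        G.IsAcyclic → HasKSparse G k j) ∧
    (∃ G : SimpleGraph (Fin (j + (j - 1) / (k + 1) - 1)),
        G.IsAcyclic ∧ ¬ HasKDense G k i ∧ ¬ HasKSparse G k j) := by
  classical
  have hqt : (k+1) * ((j-1)/(k+1)) + (j-1) % (k+1) = j - 1 := Nat.div_add_mod _ _
  have htk : (j-1) % (k+1) < k+1 := Nat.mod_lt _ (by omega)
  constructor
  · -- upper bound: every forest on j + ⌊(j-1)/(k+1)⌋ vertices has a k-sparse j-set
    intro G hG
    haveI : DecidableRel G.Adj := Classical.decRel _
    obtain ⟨D, hDsub, hdeg, hbud⟩ := sparse_delete (G := G) k hG Finset.univ ∅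
      (Finset.empty_subset _) (by intro r₁ h1; simp at h1)
    rw [Finset.empty_sdiff, Finset.sum_empty, Nat.add_zero, Finset.card_univ,
      Fintype.card_fin] at hbud
    have hDle : D.card ≤ (j-1)/(k+1) := by
      by_contra hcon
      push_neg at hcon
      have h4 : (k+2) * ((j-1)/(k+1) + 1) ≤ (k+2) * D.card := Nat.mul_le_mul_left _ (by omega)
      have h5 : (k+2) * ((j-1)/(k+1) + 1)
          = (k+1) * ((j-1)/(k+1)) + ((j-1)/(k+1)) + k + 2 := by ring
      omega
    have hjcard : j ≤ (Finset.univ \ D).card := by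
      rw [Finset.card_sdiff_of_subset (Finset.subset_univ D), Finset.card_univ, Fintype.card_fin]
      omega
    obtain ⟨T, hTsub, hTcard⟩ := Finset.exists_subset_card_eq hjcard
    refine ⟨↑T, by rw [Set.ncard_coe_finset]; exact hTcard, ?_⟩
    intro v hv
    rw [Finset.mem_coe] at hv
    have hset : {u ∈ (↑T : Set (Fin (j + (j - 1) / (k + 1)))) | G.Adj v u}
        = ↑(T.filter (fun u => G.Adj v u)) := by
      ext u
      simp
    rw [hset, Set.ncard_coe_finset]
    calc (T.filter (fun u => G.Adj v u)).card
        ≤ ((Finset.univ \ D).filter (fun u => G.Adj v u)).card :=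
          Finset.card_le_card (Finset.filter_subset_filter _ hTsub)
      _ ≤ k := hdeg v (hTsub hv)
  · -- lower bound: the star forest
    set q := (j-1)/(k+1) with hqdef
    set t := (j-1) % (k+1) with htdef
    have hm : j + (j-1)/(k+1) - 1 = q*(k+2) + t := by
      have hr : q*(k+2) = (k+1)*q + q := by ring
      omega
    have hj2 : j = q*(k+1) + t + 1 := by
      have hr : q*(k+1) = (k+1)*q := by ring
      omega
    exact ⟨starForest k q (j + (j-1)/(k+1) - 1), starForest_isAcyclic k q _,
      starForest_no_dense hk hi, starForest_no_sparse hm (by omega) hj2⟩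
end

section
/- Let k ≥ 1 and i ≥ k+4. Then no cactus contains a k-dense set of size i. -/
open SimpleGraph

private lemma edge_from_head {V : Type*} {G : SimpleGraph V} {v b x w : V}
    {p : G.Walk b x} (h : G.Adj v b) (hp : (SimpleGraph.Walk.cons h p).IsPath)
    (hw : s(v, w) ∈ (SimpleGraph.Walk.cons h p).edges) : w = b := by
  rw [Walk.edges_cons, List.mem_cons] at hw
  rcases hw with h1 | h2
  · exact Sym2.congr_right.mp h1
  · rw [Walk.cons_isPath_iff] at hp
    exact absurd (Walk.fst_mem_support_of_mem_edges p h2) hp.2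

theorem stmt6 {V : Type*} [Fintype V] (G : SimpleGraph V) (k i : ℕ)
    (hk : 1 ≤ k) (hi : k + 4 ≤ i) (hcactus : IsCactus G) :
    ¬ HasKDense G k i := by
  classical
  rintro ⟨D, hDcard, hDdense⟩
  -- every vertex of D has at least 3 G-neighbors inside D
  have hnbr : ∀ v ∈ D, 3 ≤ ({u ∈ D | G.Adj v u}).ncard := by
    intro v hv
    have hmiss : ({u ∈ D | Gᶜ.Adj v u}).ncard ≤ k := hDdense v hv
    have hsub : D ⊆ insert v ({u ∈ D | G.Adj v u} ∪ {u ∈ D | Gᶜ.Adj v u}) := by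
      intro u hu
      rcases eq_or_ne v u with rfl | hne
      · exact Set.mem_insert _ _
      rcases Classical.em (G.Adj v u) with ha | ha
      · exact Set.mem_insert_of_mem _ (Or.inl ⟨hu, ha⟩)
      · exact Set.mem_insert_of_mem _ (Or.inr ⟨hu, (G.compl_adj v u).mpr ⟨hne, ha⟩⟩)
    have h1 : D.ncard ≤ (insert v ({u ∈ D | G.Adj v u} ∪ {u ∈ D | Gᶜ.Adj v u})).ncard :=
      Set.ncard_le_ncard hsub (Set.toFinite _)
    have h2 : (insert v ({u ∈ D | G.Adj v u} ∪ {u ∈ D | Gᶜ.Adj v u})).ncard ≤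
        ({u ∈ D | G.Adj v u} ∪ {u ∈ D | Gᶜ.Adj v u}).ncard + 1 :=
      Set.ncard_insert_le _ _
    have h3 : ({u ∈ D | G.Adj v u} ∪ {u ∈ D | Gᶜ.Adj v u}).ncard ≤
        ({u ∈ D | G.Adj v u}).ncard + ({u ∈ D | Gᶜ.Adj v u}).ncard :=
      Set.ncard_union_le _ _
    omega
  -- the set of lengths of paths with support in D
  set PS : Set ℕ :=
    {n | ∃ (a c : V) (p : G.Walk a c), p.IsPath ∧ (∀ x ∈ p.support, x ∈ D) ∧ p.length = n}
    with hPS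
  have hDne : D.Nonempty := by
    rw [← Set.ncard_pos (Set.toFinite _), hDcard]; omega
  obtain ⟨x0, hx0⟩ := hDne
  have h0 : 0 ∈ PS := ⟨x0, x0, Walk.nil, Walk.IsPath.nil, by simpa using hx0, rfl⟩
  have hbdd : BddAbove PS := by
    refine ⟨Fintype.card V, ?_⟩
    rintro n ⟨a, c, p, hp, _, rfl⟩
    exact (hp.length_lt).le
  obtain ⟨a, w, p, hp, hpD, hplen⟩ := Nat.sSup_mem ⟨0, h0⟩ hbdd
  obtain ⟨q, hq, hqD, hqlen⟩ :
      ∃ q : G.Walk w a, q.IsPath ∧ (∀ x ∈ q.support, x ∈ D) ∧ q.length = sSup PS :=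
    ⟨p.reverse, hp.reverse,
      fun x hx => hpD x (by simpa [Walk.support_reverse] using hx),
      by simpa [Walk.length_reverse] using hplen⟩
  have hwD : w ∈ D := hqD w q.start_mem_support
  -- maximality: every D-neighbor of w is on q
  have hmax : ∀ z, G.Adj w z → z ∈ D → z ∈ q.support := by
    intro z hz hzD
    by_contra hzs
    have hp' : (Walk.cons hz.symm q).IsPath := (Walk.cons_isPath_iff _ _).mpr ⟨hq, hzs⟩
    have hmem : q.length + 1 ∈ PS := by
      refine ⟨z, a, Walk.cons hz.symm q, hp', ?_, by simp⟩
      intro x hx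
      rcases (by simpa using hx : x = z ∨ x ∈ q.support) with rfl | hx'
      · exact hzD
      · exact hqD x hx'
    have := le_csSup hbdd hmem
    omega
  set S : Set V := {u ∈ D | G.Adj w u} with hSdef
  have hS3 : 3 ≤ S.ncard := hnbr w hwD
  have hSsup : ∀ z ∈ S, z ∈ q.support := fun z hz => hmax z hz.2 hz.1
  -- q is not nil
  obtain ⟨b, hb, r, hqeq⟩ : ∃ (b : V) (hb : G.Adj w b) (r : G.Walk b a), q = Walk.cons hb r := by
    rw [← Walk.not_nil_iff]
    intro hnil
    obtain ⟨s0, hs0⟩ : S.Nonempty := by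
      rw [← Set.ncard_pos (Set.toFinite _)]; omega
    have hss := hSsup s0 hs0
    rw [Walk.nil_iff_support_eq.mp hnil] at hss
    simp at hss
    exact hs0.2.ne hss.symm
  subst hqeq
  -- pick two neighbors distinct from b
  have hS' : 2 ≤ (S \ {b}).ncard := by
    have hsub : S ⊆ insert b (S \ {b}) := by
      intro z hz
      rcases eq_or_ne z b with rfl | hne
      · exact Set.mem_insert _ _
      · exact Set.mem_insert_of_mem _ ⟨hz, hne⟩
    have h1 : S.ncard ≤ (insert b (S \ {b})).ncard := Set.ncard_le_ncard hsub (Set.toFinite _)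
    have h2 : (insert b (S \ {b})).ncard ≤ (S \ {b}).ncard + 1 := Set.ncard_insert_le _ _
    omega
  obtain ⟨w1, w2, hw1, hw2, hw12⟩ :=
    (Set.one_lt_ncard_iff (s := S \ {b}) (Set.toFinite _)).mp (by omega)
  -- build the two cycles
  have key : ∀ z ∈ S \ {b}, ∃ c : G.Walk w w, c.IsCycle ∧
      s(w, b) ∈ c.edges ∧ s(w, z) ∈ c.edges ∧
      (∀ e ∈ c.edges, e = s(w, z) ∨ e ∈ (Walk.cons hb r).edges) := by
    rintro z ⟨hzS, hzb⟩
    have hadj : G.Adj w z := hzS.2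
    have hzsup : z ∈ (Walk.cons hb r).support := hSsup z hzS
    set t : G.Walk w z := (Walk.cons hb r).takeUntil z hzsup with htdef
    have ht : t.IsPath := hq.takeUntil hzsup
    have hedge_sub : ∀ e ∈ t.edges, e ∈ (Walk.cons hb r).edges := fun e he =>
      Walk.edges_takeUntil_subset _ hzsup he
    have hwz_not : s(w, z) ∉ t.edges := by
      intro hmem
      have : z = b := edge_from_head hb hq (hedge_sub _ hmem)
      exact hzb (by simp [this])
    refine ⟨Walk.cons hadj t.reverse, ?_, ?_, ?_, ?_⟩
    · rw [Walk.cons_isCycle_iff]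
      refine ⟨ht.reverse, ?_⟩
      rw [Walk.edges_reverse, List.mem_reverse]
      exact hwz_not
    · -- s(w,b) ∈ edges: it is the first edge of t
      have htne : ¬ t.Nil := Walk.not_nil_of_ne hadj.ne
      obtain ⟨b', hb', r', hteq⟩ := Walk.not_nil_iff.mp htne
      have hsplit : t.edges ++ ((Walk.cons hb r).dropUntil z hzsup).edges
          = (Walk.cons hb r).edges := by
        rw [← Walk.edges_append, Walk.take_spec]
      rw [hteq] at hsplit
      simp only [Walk.edges_cons, List.cons_append] at hsplit
      have hhead : s(w, b') = s(w, b) := by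
        have := congrArg (fun l => l.head?) hsplit
        simpa using this
      rw [Walk.edges_cons]
      refine List.mem_cons_of_mem _ ?_
      rw [Walk.edges_reverse, List.mem_reverse, hteq, Walk.edges_cons, hhead]
      exact List.mem_cons_self
    · simp [Walk.edges_cons]
    · intro e he
      rw [Walk.edges_cons, List.mem_cons] at he
      rcases he with rfl | he
      · exact Or.inl rfl
      · rw [Walk.edges_reverse, List.mem_reverse] at he
        exact Or.inr (hedge_sub _ he)
  obtain ⟨c1, hc1, hc1b, hc1w, hc1sub⟩ := key w1 hw1
  obtain ⟨c2, hc2, hc2b, hc2w, hc2sub⟩ := key w2 hw2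
  have hiff := hcactus w w c1 c2 hc1 hc2 ⟨s(w, b), hc1b, hc2b⟩
  have hmem : s(w, w1) ∈ c2.edges := (hiff _).mp hc1w
  rcases hc2sub _ hmem with heq | hmem'
  · exact hw12 (Sym2.congr_right.mp heq)
  · have : w1 = b := edge_from_head hb hq hmem'
    exact hw1.2 (by simp [this])
end

section
/- If G is a cactus on n vertices, then G has a 1-sparse set of size at least ⌊n/2⌋ + r(n), where r(n) = 0 if n ≡ 0 (mod 4) and r(n) = 1 otherwise. -/
open SimpleGraph

section Stmt7Aux
open Walk
variable {V : Type*} {G : SimpleGraph V}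

lemma sym2_eq_cases {a b c d : V} (h : s(a,b) = s(c,d)) : (a = c ∧ b = d) ∨ (a = d ∧ b = c) := by
  simpa only [Sym2.eq, Sym2.rel_iff', Prod.mk.injEq, Prod.swap_prod_mk] using h

lemma edge_at_start {v u' t x : V} (h : G.Adj v u') (q : G.Walk u' t)
    (hp : (Walk.cons h q).IsPath) (hx : s(v, x) ∈ (Walk.cons h q).edges) : x = u' := by
  rw [Walk.edges_cons, List.mem_cons] at hx
  rcases hx with hx | hx
  · rcases sym2_eq_cases hx with ⟨-, rfl⟩ | ⟨h1, -⟩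
    · rfl
    · exact absurd h1 h.ne
  · exfalso
    have : v ∈ q.support := q.fst_mem_support_of_mem_edges hx
    rw [Walk.cons_isPath_iff] at hp
    exact hp.2 this

lemma edge_at_snd {v u w t x : V} (h₁ : G.Adj v u) (h₂ : G.Adj u w) (r : G.Walk w t)
    (hp : (Walk.cons h₁ (Walk.cons h₂ r)).IsPath)
    (hx : s(u, x) ∈ (Walk.cons h₁ (Walk.cons h₂ r)).edges) : x = v ∨ x = w := by
  rw [Walk.edges_cons, List.mem_cons] at hx
  rcases hx with hx | hx
  · rcases sym2_eq_cases hx with ⟨h1, -⟩ | ⟨-, rfl⟩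
    · exact absurd h1 h₁.ne'
    · exact Or.inl rfl
  · rw [Walk.cons_isPath_iff] at hp
    exact Or.inr (edge_at_start h₂ r hp.1 hx)

lemma takeUntil_cons_of_ne [DecidableEq V] {v w t u : V} (r : G.Adj v w) (p : G.Walk w t)
    (h' : u ∈ p.support) (hne : v ≠ u) :
    (Walk.cons r p).takeUntil u (by simp [h']) = Walk.cons r (p.takeUntil u h') := by
  simp [Walk.takeUntil, dif_neg hne]

section Main
variable [Fintype V] [DecidableEq V] {L : ℕ} {v u w t : V} {h₁ : G.Adj v u} {h₂ : G.Adj u w}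
  {r : G.Walk w t}

-- membership helper : neighbors of v are in the support of the tail
lemma mem_q_of_adj_v (hp : (Walk.cons h₁ (Walk.cons h₂ r)).IsPath)
    (hpl : (Walk.cons h₁ (Walk.cons h₂ r)).length = L)
    (hend : ∀ {z s : V} (q : G.Walk z s), q.IsPath → q.length = L →
      ∀ x, G.Adj z x → x ∈ q.support)
    (x : V) (hvx : G.Adj v x) : x ∈ (Walk.cons h₂ r).support := by
  have := hend _ hp hpl x hvx
  rw [Walk.support_cons, List.mem_cons] at this
  rcases this with rfl | h
  · exact absurd hvx (G.irrefl)
  · exact h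

-- the prefix cycle through v (given a second neighbor a of v)
lemma cycle_at_v (hp : (Walk.cons h₁ (Walk.cons h₂ r)).IsPath)
    (hpl : (Walk.cons h₁ (Walk.cons h₂ r)).length = L)
    (hend : ∀ {z s : V} (q : G.Walk z s), q.IsPath → q.length = L →
      ∀ x, G.Adj z x → x ∈ q.support)
    {a : V} (hva : G.Adj v a) (hau : a ≠ u) :
    ∃ C : G.Walk v v, C.IsCycle ∧ s(v,u) ∈ C.edges ∧ s(v,a) ∈ C.edges ∧ s(u,w) ∈ C.edges ∧
      (∀ y, s(v,y) ∈ C.edges → y = u ∨ y = a) ∧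
      (∀ y, s(u,y) ∈ C.edges → y = v ∨ y = w) := by
  have haq : a ∈ (Walk.cons h₂ r).support := mem_q_of_adj_v hp hpl hend a hva
  have har : a ∈ r.support := by
    rw [Walk.support_cons, List.mem_cons] at haq
    exact haq.resolve_left (fun h => hau h)
  have haP : a ∈ (Walk.cons h₁ (Walk.cons h₂ r)).support := by
    simp [Walk.support_cons]
    right; right; exact har
  set Qa := (Walk.cons h₁ (Walk.cons h₂ r)).takeUntil a haP with hQadef
  have hQa : Qa = Walk.cons h₁ ((Walk.cons h₂ r).takeUntil a haq) := by
    rw [hQadef]; exact takeUntil_cons_of_ne h₁ _ haq (fun h => hva.ne' h.symm)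
  have hQa2 : (Walk.cons h₂ r).takeUntil a haq = Walk.cons h₂ (r.takeUntil a har) :=
    takeUntil_cons_of_ne h₂ _ har (fun h => hau h.symm)
  have hQaPath : Qa.IsPath := hp.takeUntil _
  have hQaEdges : Qa.edges ⊆ (Walk.cons h₁ (Walk.cons h₂ r)).edges := by
    rw [hQadef]; exact Walk.edges_takeUntil_subset _ _
  have hnotin : s(v,a) ∉ Qa.reverse.edges := by
    rw [Walk.edges_reverse, List.mem_reverse]
    intro hmem
    exact hau (edge_at_start h₁ _ hp (hQaEdges hmem))
  refine ⟨Walk.cons hva Qa.reverse, ?_, ?_, ?_, ?_, ?_, ?_⟩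
  · rw [Walk.cons_isCycle_iff]
    exact ⟨hQaPath.reverse, hnotin⟩
  · rw [Walk.edges_cons, List.mem_cons]
    right
    rw [Walk.edges_reverse, List.mem_reverse, hQa, Walk.edges_cons]
    exact List.mem_cons_self
  · rw [Walk.edges_cons]; exact List.mem_cons_self
  · rw [Walk.edges_cons, List.mem_cons]
    right
    rw [Walk.edges_reverse, List.mem_reverse, hQa, Walk.edges_cons, List.mem_cons]
    right
    rw [hQa2, Walk.edges_cons]
    exact List.mem_cons_self
  · intro y hy
    rw [Walk.edges_cons, List.mem_cons] at hy
    rcases hy with hy | hy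
    · rcases sym2_eq_cases hy with ⟨-, rfl⟩ | ⟨h3, -⟩
      · exact Or.inr rfl
      · exact absurd h3 hva.ne
    · rw [Walk.edges_reverse, List.mem_reverse] at hy
      exact Or.inl (edge_at_start h₁ _ hp (hQaEdges hy))
  · intro y hy
    rw [Walk.edges_cons, List.mem_cons] at hy
    rcases hy with hy | hy
    · rcases sym2_eq_cases hy with ⟨h3, -⟩ | ⟨h3, -⟩
      · exact absurd h3 h₁.ne'
      · exact absurd h3.symm hau
    · rw [Walk.edges_reverse, List.mem_reverse] at hy
      exact edge_at_snd h₁ h₂ r hp (hQaEdges hy)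

end Main

section Main2
variable [Fintype V] [DecidableEq V] {L : ℕ} {v u w t : V} {h₁ : G.Adj v u} {h₂ : G.Adj u w}
  {r : G.Walk w t}

-- cycle through u for an on-path extra neighbor x of u
lemma cycle_at_u_onpath (hp : (Walk.cons h₁ (Walk.cons h₂ r)).IsPath)
    {x : V} (hux : G.Adj u x) (hxw : x ≠ w) (hxq : x ∈ (Walk.cons h₂ r).support) :
    ∃ C : G.Walk u u, C.IsCycle ∧ s(u,w) ∈ C.edges ∧ s(u,x) ∈ C.edges ∧
      (∀ y, s(u,y) ∈ C.edges → y = w ∨ y = x) := by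
  have hq : (Walk.cons h₂ r).IsPath := ((Walk.cons_isPath_iff _ _).mp hp).1
  have hxr : x ∈ r.support := by
    rw [Walk.support_cons, List.mem_cons] at hxq
    exact hxq.resolve_left (fun h => hux.ne' h)
  set S := (Walk.cons h₂ r).takeUntil x hxq with hSdef
  have hS : S = Walk.cons h₂ (r.takeUntil x hxr) := by
    rw [hSdef]; exact takeUntil_cons_of_ne h₂ _ hxr hux.ne
  have hSPath : S.IsPath := hq.takeUntil _
  have hSEdges : S.edges ⊆ (Walk.cons h₂ r).edges := by
    rw [hSdef]; exact Walk.edges_takeUntil_subset _ _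
  have hnotin : s(u,x) ∉ S.reverse.edges := by
    rw [Walk.edges_reverse, List.mem_reverse]
    intro hmem
    exact hxw (edge_at_start h₂ _ hq (hSEdges hmem))
  refine ⟨Walk.cons hux S.reverse, ?_, ?_, ?_, ?_⟩
  · rw [Walk.cons_isCycle_iff]
    exact ⟨hSPath.reverse, hnotin⟩
  · rw [Walk.edges_cons, List.mem_cons]
    right
    rw [Walk.edges_reverse, List.mem_reverse, hS, Walk.edges_cons]
    exact List.mem_cons_self
  · rw [Walk.edges_cons]; exact List.mem_cons_self
  · intro y hy
    rw [Walk.edges_cons, List.mem_cons] at hy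
    rcases hy with hy | hy
    · rcases sym2_eq_cases hy with ⟨-, rfl⟩ | ⟨h3, -⟩
      · exact Or.inr rfl
      · exact absurd h3 hux.ne
    · rw [Walk.edges_reverse, List.mem_reverse] at hy
      exact Or.inl (edge_at_start h₂ _ hq (hSEdges hy))

-- cycle through u for an off-path non-leaf neighbor x of u
lemma cycle_at_u_offpath (hp : (Walk.cons h₁ (Walk.cons h₂ r)).IsPath)
    {x y₀ : V} (hux : G.Adj u x) (hxP : x ∉ (Walk.cons h₁ (Walk.cons h₂ r)).support)
    (hxy₀ : G.Adj x y₀) (hy₀u : y₀ ≠ u) (hy₀q : y₀ ∈ (Walk.cons h₂ r).support) :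
    ∃ C : G.Walk u u, C.IsCycle ∧ s(u,w) ∈ C.edges ∧ s(u,x) ∈ C.edges ∧
      (∀ y, s(u,y) ∈ C.edges → y = w ∨ y = x) := by
  have hq : (Walk.cons h₂ r).IsPath := ((Walk.cons_isPath_iff _ _).mp hp).1
  have hy₀r : y₀ ∈ r.support := by
    rw [Walk.support_cons, List.mem_cons] at hy₀q
    exact hy₀q.resolve_left hy₀u
  set S := (Walk.cons h₂ r).takeUntil y₀ hy₀q with hSdef
  have hS : S = Walk.cons h₂ (r.takeUntil y₀ hy₀r) := by
    rw [hSdef]; exact takeUntil_cons_of_ne h₂ _ hy₀r (fun h => hy₀u h.symm)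
  have hSPath : S.IsPath := hq.takeUntil _
  have hSEdges : S.edges ⊆ (Walk.cons h₂ r).edges := by
    rw [hSdef]; exact Walk.edges_takeUntil_subset _ _
  have hSsupp : S.support ⊆ (Walk.cons h₂ r).support := by
    rw [hSdef]; exact Walk.support_takeUntil_subset _ _
  have hxS : x ∉ S.support := by
    intro hmem
    apply hxP
    rw [Walk.support_cons, List.mem_cons]
    exact Or.inr (hSsupp hmem)
  set S' := S.concat hxy₀.symm with hS'def
  have hS'Path : S'.IsPath := by
    rw [Walk.isPath_def, hS'def, Walk.support_concat,
      List.nodup_append]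
    refine ⟨hSPath.support_nodup, List.nodup_singleton _, ?_⟩
    intro a ha b hb hab; subst hab
    rw [List.mem_singleton] at hb
    subst hb
    exact hxS ha
  have hS'edges : S'.edges = S.edges ++ [s(y₀, x)] := by
    rw [hS'def, Walk.edges_concat, List.concat_eq_append]
  have hxq : x ∉ (Walk.cons h₂ r).support := by
    intro hmem
    apply hxP
    rw [Walk.support_cons, List.mem_cons]
    exact Or.inr hmem
  have hnotin : s(u,x) ∉ S'.reverse.edges := by
    rw [Walk.edges_reverse, List.mem_reverse, hS'edges, List.mem_append]
    rintro (hmem | hmem)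
    · exact hxq ((Walk.cons h₂ r).snd_mem_support_of_mem_edges (hSEdges hmem))
    · rw [List.mem_singleton] at hmem
      rcases sym2_eq_cases hmem with ⟨h3, -⟩ | ⟨h3, -⟩
      · exact hy₀u h3.symm
      · exact hux.ne h3
  refine ⟨Walk.cons hux S'.reverse, ?_, ?_, ?_, ?_⟩
  · rw [Walk.cons_isCycle_iff]
    exact ⟨hS'Path.reverse, hnotin⟩
  · rw [Walk.edges_cons, List.mem_cons]
    right
    rw [Walk.edges_reverse, List.mem_reverse, hS'edges, List.mem_append]
    left
    rw [hS, Walk.edges_cons]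
    exact List.mem_cons_self
  · rw [Walk.edges_cons]; exact List.mem_cons_self
  · intro y hy
    rw [Walk.edges_cons, List.mem_cons] at hy
    rcases hy with hy | hy
    · rcases sym2_eq_cases hy with ⟨-, rfl⟩ | ⟨h3, -⟩
      · exact Or.inr rfl
      · exact absurd h3 hux.ne
    · rw [Walk.edges_reverse, List.mem_reverse, hS'edges, List.mem_append] at hy
      rcases hy with hy | hy
      · exact Or.inl (edge_at_start h₂ _ hq (hSEdges hy))
      · rw [List.mem_singleton] at hy
        rcases sym2_eq_cases hy with ⟨h3, -⟩ | ⟨h3, -⟩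
        · exact absurd h3.symm hy₀u
        · exact absurd h3 hux.ne
end Main2

lemma good_pair [Fintype V] (G : SimpleGraph V) (hcac : IsCactus G)
    (hedge : ∃ a b, G.Adj a b) :
    ∃ (x y : V) (R : Finset V), x ≠ y ∧ x ∈ R ∧ y ∈ R ∧ R.card ≤ 4 ∧
      (∀ z, G.Adj x z → z ∈ R) ∧ (∀ z, G.Adj y z → z ∈ R) := by
  classical
  obtain ⟨a₀, b₀, hab⟩ := hedge
  set P : ℕ → Prop := fun l => ∃ (a b : V) (q : G.Walk a b), q.IsPath ∧ q.length = l with hPdef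
  have hP1 : P 1 := ⟨a₀, b₀, Walk.cons hab Walk.nil, by simp [hab.ne], rfl⟩
  have hcard1 : 1 ≤ Fintype.card V := Fintype.card_pos_iff.mpr ⟨a₀⟩
  set L := Nat.findGreatest P (Fintype.card V) with hL
  have hLspec : P L := Nat.findGreatest_spec hcard1 hP1
  have hmaxlen : ∀ {a b : V} (q : G.Walk a b), q.IsPath → q.length ≤ L := by
    intro a b q hq
    by_contra hlen
    push_neg at hlen
    exact Nat.findGreatest_is_greatest hlen (le_of_lt hq.length_lt) ⟨a, b, q, hq, rfl⟩
  obtain ⟨v, t, p, hp, hpl⟩ := hLspec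
  have hl1 : 1 ≤ p.length := hpl ▸ Nat.le_findGreatest hcard1 hP1
  have hend : ∀ {z s : V} (q : G.Walk z s), q.IsPath → q.length = L →
      ∀ x, G.Adj z x → x ∈ q.support := by
    intro z s q hq hql x hadj
    by_contra hx
    have hp' : (Walk.cons hadj.symm q).IsPath := by
      rw [Walk.cons_isPath_iff]; exact ⟨hq, hx⟩
    have := hmaxlen _ hp'
    rw [Walk.length_cons, hql] at this
    omega
  cases p with
  | nil => simp at hl1
  | @cons _ u _ h₁ q =>
    cases q with
    | nil =>
      -- p is a single edge v-t
      refine ⟨v, t, {v, t}, h₁.ne, by simp, by simp, ?_, ?_, ?_⟩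
      · apply le_trans (Finset.card_insert_le _ _); simp
      · intro z hz
        have := hend _ hp hpl z hz
        simp only [Walk.support_cons, Walk.support_nil, List.mem_cons] at this
        simp only [Finset.mem_insert, Finset.mem_singleton]
        rcases this with rfl | h | h
        · exact Or.inl rfl
        · exact Or.inr (by simpa using h)
        · simp at h
      · intro z hz
        have hrev : (Walk.cons h₁ Walk.nil).reverse.IsPath := hp.reverse
        have hrl : (Walk.cons h₁ Walk.nil).reverse.length = L := by
          rw [Walk.length_reverse]; exact hpl
        have := hend _ hrev hrl z hz
        rw [Walk.support_reverse, List.mem_reverse] at this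
        simp only [Walk.support_cons, Walk.support_nil, List.mem_cons] at this
        simp only [Finset.mem_insert, Finset.mem_singleton]
        tauto
    | @cons _ w _ h₂ r =>
      -- p = v - u - w - ...
      have hq : (Walk.cons h₂ r).IsPath := ((Walk.cons_isPath_iff _ _).mp hp).1
      have hvq : v ∉ (Walk.cons h₂ r).support := ((Walk.cons_isPath_iff _ _).mp hp).2
      -- degree of v is at most 2
      have hD : ∀ a b, G.Adj v a → G.Adj v b → a ≠ u → b ≠ u → a = b := by
        intro a b hva hvb hau hbu
        by_contra hab
        obtain ⟨Ca, hCa, hCavu, hCava, -, hCaAtV, -⟩ := cycle_at_v hp hpl hend hva hau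
        obtain ⟨Cb, hCb, hCbvu, hCbvb, -, -, -⟩ := cycle_at_v hp hpl hend hvb hbu
        have hiff := hcac v v Ca Cb hCa hCb ⟨s(v,u), hCavu, hCbvu⟩
        have := (hiff s(v,b)).mpr hCbvb
        rcases hCaAtV b this with h3 | h3
        · exact hbu h3
        · exact hab h3.symm
      -- Ext predicate
      set Ext : V → Prop := fun b => ∃ C : G.Walk u u, C.IsCycle ∧ s(u,w) ∈ C.edges ∧
        s(u,b) ∈ C.edges ∧ ∀ y, s(u,y) ∈ C.edges → y = w ∨ y = b with hExtdef
      have hE1 : ∀ b₁ b₂, Ext b₁ → b₁ ≠ w → Ext b₂ → b₁ = b₂ := by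
        rintro b₁ b₂ ⟨C₁, hC₁, hC₁w, hC₁b, -⟩ hb₁w ⟨C₂, hC₂, hC₂w, hC₂b, hC₂at⟩
        have hiff := hcac u u C₂ C₁ hC₂ hC₁ ⟨s(u,w), hC₂w, hC₁w⟩
        have := (hiff s(u,b₁)).mpr hC₁b
        rcases hC₂at b₁ this with h3 | h3
        · exact absurd h3 hb₁w
        · exact h3
      -- if v has a second neighbor, there are no extras outside {v,w}
      have hE2 : ∀ a, G.Adj v a → a ≠ u → ∀ b, Ext b → b = v ∨ b = w := by
        rintro a hva hau b ⟨C, hC, hCw, hCb, -⟩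
        obtain ⟨C₀, hC₀, -, -, hC₀uw, -, hC₀AtU⟩ := cycle_at_v hp hpl hend hva hau
        have hiff := hcac u v C C₀ hC hC₀ ⟨s(u,w), hCw, hC₀uw⟩
        exact hC₀AtU b ((hiff s(u,b)).mp hCb)
      -- classification of the neighbors of u
      have hNv : ∀ x, G.Adj v x → x ∈ (Walk.cons h₂ r).support :=
        fun x hx => mem_q_of_adj_v hp hpl hend x hx
      by_cases hz : ∃ z, G.Adj u z ∧ z ∉ (Walk.cons h₁ (Walk.cons h₂ r)).support ∧
          (∀ y, G.Adj z y → y = u)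
      · -- there is a pendant leaf z at u : use the pair (v, z)
        obtain ⟨z, huz, hzP, hzleaf⟩ := hz
        have hvz : v ≠ z := by
          rintro rfl
          exact hzP (Walk.start_mem_support _)
        by_cases hA : ∃ a, G.Adj v a ∧ a ≠ u
        · obtain ⟨a, hva, hau⟩ := hA
          refine ⟨v, z, {v, z, u, a}, hvz, by simp, by simp, ?_, ?_, ?_⟩
          · apply le_trans (Finset.card_insert_le _ _)
            have := Finset.card_insert_le z ({u, a} : Finset V)
            have := Finset.card_insert_le u ({a} : Finset V)
            simp only [Finset.card_singleton] at *
            omega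
          · intro x hvx
            simp only [Finset.mem_insert, Finset.mem_singleton]
            by_cases hxu : x = u
            · tauto
            · exact Or.inr (Or.inr (Or.inr (hD x a hvx hva hxu hau)))
          · intro x hzx
            simp only [Finset.mem_insert, Finset.mem_singleton]
            exact Or.inr (Or.inr (Or.inl (hzleaf x hzx)))
        · push_neg at hA
          refine ⟨v, z, {v, z, u}, hvz, by simp, by simp, ?_, ?_, ?_⟩
          · apply le_trans (Finset.card_insert_le _ _)
            have := Finset.card_insert_le z ({u} : Finset V)
            simp only [Finset.card_singleton] at *
            omega
          · intro x hvx
            simp only [Finset.mem_insert, Finset.mem_singleton]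
            exact Or.inr (Or.inr (hA x hvx))
          · intro x hzx
            simp only [Finset.mem_insert, Finset.mem_singleton]
            exact Or.inr (Or.inr (hzleaf x hzx))
      · -- no pendant leaf at u : every neighbor of u is v, w, or an extra
        push_neg at hz
        have hU : ∀ x, G.Adj u x → x = v ∨ x = w ∨ Ext x := by
          intro x hux
          by_cases hxv : x = v
          · exact Or.inl hxv
          by_cases hxw : x = w
          · exact Or.inr (Or.inl hxw)
          right; right
          by_cases hxP : x ∈ (Walk.cons h₁ (Walk.cons h₂ r)).support
          · have hxq : x ∈ (Walk.cons h₂ r).support := by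
              rw [Walk.support_cons, List.mem_cons] at hxP
              exact hxP.resolve_left hxv
            exact cycle_at_u_onpath hp hux hxw hxq
          · obtain ⟨y₀, hxy₀, hy₀u⟩ := hz x hux hxP
            -- x is the endpoint of another maximum path, so y₀ is on it
            have hx_path : (Walk.cons hux.symm (Walk.cons h₂ r)).IsPath := by
              rw [Walk.cons_isPath_iff]
              refine ⟨hq, ?_⟩
              intro hmem
              exact hxP (by rw [Walk.support_cons, List.mem_cons]; exact Or.inr hmem)
            have hx_len : (Walk.cons hux.symm (Walk.cons h₂ r)).length = L := by
              rw [Walk.length_cons]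
              rw [Walk.length_cons] at hpl
              exact hpl
            have hy₀S := hend _ hx_path hx_len y₀ hxy₀
            rw [Walk.support_cons, List.mem_cons] at hy₀S
            have hy₀q : y₀ ∈ (Walk.cons h₂ r).support := by
              rcases hy₀S with rfl | h3
              · exact absurd hxy₀ (G.irrefl)
              · exact h3
            exact cycle_at_u_offpath hp hux hxP hxy₀ hy₀u hy₀q
        by_cases hA : ∃ a, G.Adj v a ∧ a ≠ u
        · obtain ⟨a, hva, hau⟩ := hA
          have hNu : ∀ x, G.Adj u x → x = v ∨ x = w := by
            intro x hux
            rcases hU x hux with h3 | h3 | h3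
            · exact Or.inl h3
            · exact Or.inr h3
            · exact hE2 a hva hau x h3
          refine ⟨v, u, {v, u, w, a}, h₁.ne, by simp, by simp, ?_, ?_, ?_⟩
          · apply le_trans (Finset.card_insert_le _ _)
            have := Finset.card_insert_le u ({w, a} : Finset V)
            have := Finset.card_insert_le w ({a} : Finset V)
            simp only [Finset.card_singleton] at *
            omega
          · intro x hvx
            simp only [Finset.mem_insert, Finset.mem_singleton]
            by_cases hxu : x = u
            · tauto
            · exact Or.inr (Or.inr (Or.inr (hD x a hvx hva hxu hau)))
          · intro x hux
            simp only [Finset.mem_insert, Finset.mem_singleton]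
            rcases hNu x hux with rfl | rfl
            · tauto
            · tauto
        · push_neg at hA
          by_cases hB : ∃ b, Ext b ∧ b ≠ v ∧ b ≠ w
          · obtain ⟨b, hExtb, hbv, hbw⟩ := hB
            have hNu : ∀ x, G.Adj u x → x = v ∨ x = w ∨ x = b := by
              intro x hux
              rcases hU x hux with h3 | h3 | h3
              · exact Or.inl h3
              · exact Or.inr (Or.inl h3)
              · by_cases hxw : x = w
                · exact Or.inr (Or.inl hxw)
                · exact Or.inr (Or.inr (hE1 x b h3 hxw hExtb))
            refine ⟨v, u, {v, u, w, b}, h₁.ne, by simp, by simp, ?_, ?_, ?_⟩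
            · apply le_trans (Finset.card_insert_le _ _)
              have := Finset.card_insert_le u ({w, b} : Finset V)
              have := Finset.card_insert_le w ({b} : Finset V)
              simp only [Finset.card_singleton] at *
              omega
            · intro x hvx
              simp only [Finset.mem_insert, Finset.mem_singleton]
              exact Or.inr (Or.inl (hA x hvx))
            · intro x hux
              simp only [Finset.mem_insert, Finset.mem_singleton]
              rcases hNu x hux with rfl | rfl | rfl
              · tauto
              · tauto
              · tauto
          · push_neg at hB
            have hNu : ∀ x, G.Adj u x → x = v ∨ x = w := by
              intro x hux
              rcases hU x hux with h3 | h3 | h3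
              · exact Or.inl h3
              · exact Or.inr h3
              · rcases Classical.em (x = v) with h4 | h4
                · exact Or.inl h4
                · exact Or.inr (hB x h3 h4)
            refine ⟨v, u, {v, u, w}, h₁.ne, by simp, by simp, ?_, ?_, ?_⟩
            · apply le_trans (Finset.card_insert_le _ _)
              have := Finset.card_insert_le u ({w} : Finset V)
              simp only [Finset.card_singleton] at *
              omega
            · intro x hvx
              simp only [Finset.mem_insert, Finset.mem_singleton]
              exact Or.inr (Or.inl (hA x hvx))
            · intro x hux
              simp only [Finset.mem_insert, Finset.mem_singleton]
              rcases hNu x hux with rfl | rfl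
              · tauto
              · tauto

lemma cactus_comap {V W : Type*} (G : SimpleGraph V) (f : W ↪ V) (hc : IsCactus G) :
    IsCactus (G.comap f) := by
  rintro a b c₁ c₂ h₁ h₂ ⟨e, he₁, he₂⟩ e'
  let φ : G.comap f →g G := ⟨f, fun h => h⟩
  have hφ : Function.Injective φ := f.injective
  have H := hc (f a) (f b) (c₁.map φ) (c₂.map φ) (h₁.map hφ) (h₂.map hφ)
    ⟨Sym2.map φ e, by
      rw [Walk.edges_map, Walk.edges_map]
      exact ⟨List.mem_map_of_mem he₁, List.mem_map_of_mem he₂⟩⟩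
  have key : ∀ (c : (G.comap f).Walk a a) (c' : (G.comap f).Walk b b), True → True := fun _ _ _ => trivial
  constructor <;> intro hm
  · have h3 := (H (Sym2.map φ e')).mp (by rw [Walk.edges_map]; exact List.mem_map_of_mem hm)
    rw [Walk.edges_map] at h3
    exact (List.mem_map_of_injective (Sym2.map.injective hφ)).mp h3
  · have h3 := (H (Sym2.map φ e')).mpr (by rw [Walk.edges_map]; exact List.mem_map_of_mem hm)
    rw [Walk.edges_map] at h3
    exact (List.mem_map_of_injective (Sym2.map.injective hφ)).mp h3

lemma cactus_aux : ∀ (n : ℕ) {V : Type*} [Fintype V] (G : SimpleGraph V), IsCactus G →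
    Fintype.card V = n →
    ∃ S : Set V, KSparse G 1 S ∧ n / 2 + (if n % 4 = 0 then 0 else 1) ≤ S.ncard := by
  intro n
  induction n using Nat.strong_induction_on with
  | _ n IH =>
  intro V _ G hcac hn
  classical
  by_cases hedge : ∃ a b, G.Adj a b
  · obtain ⟨x, y, R, hxy, hxR, hyR, hR4, hNx, hNy⟩ := good_pair G hcac hedge
    set G' : SimpleGraph {z : V // z ∉ R} := G.comap (Function.Embedding.subtype _) with hG'def
    have hcac' : IsCactus G' := cactus_comap G _ hcac
    have hcard' : Fintype.card {z : V // z ∉ R} = n - R.card := by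
      rw [← hn, Fintype.card_subtype_compl, Fintype.card_coe]
    have hR1 : 1 ≤ R.card := Finset.card_pos.mpr ⟨x, hxR⟩
    have hn1 : 1 ≤ n := by
      rw [← hn]
      exact Fintype.card_pos_iff.mpr ⟨x⟩
    have hRn : R.card ≤ n := hn ▸ Finset.card_le_univ R
    obtain ⟨S', hS'sparse, hS'card⟩ := IH (n - R.card) (by omega) G' hcac' hcard'
    set S : Set V := (Subtype.val '' S') ∪ {x, y} with hSdef
    have himgR : ∀ z ∈ (Subtype.val '' S' : Set V), z ∉ R := by
      rintro z ⟨z₀, -, rfl⟩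
      exact z₀.2
    have hdisj : Disjoint (Subtype.val '' S' : Set V) ({x, y} : Set V) := by
      rw [Set.disjoint_left]
      rintro z hz (rfl | rfl)
      · exact himgR _ hz hxR
      · exact himgR _ hz hyR
    have hScard : S.ncard = S'.ncard + 2 := by
      rw [hSdef, Set.ncard_union_eq hdisj (Set.toFinite _) (Set.toFinite _),
        Set.ncard_image_of_injective _ Subtype.val_injective, Set.ncard_pair hxy]
    refine ⟨S, ?_, ?_⟩
    · intro z hz
      rcases hz with hzim | hzxy
      · obtain ⟨z₀, hz₀, rfl⟩ := hzim
        have hset : {u ∈ S | G.Adj (↑z₀) u} = Subtype.val '' {u ∈ S' | G'.Adj z₀ u} := by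
          ext z'
          constructor
          · rintro ⟨hz'S, hadj⟩
            rcases hz'S with hz'im | hz'xy
            · obtain ⟨u₀, hu₀, rfl⟩ := hz'im
              exact ⟨u₀, ⟨hu₀, hadj⟩, rfl⟩
            · exfalso
              rcases hz'xy with rfl | rfl
              · exact z₀.2 (hNx _ hadj.symm)
              · exact z₀.2 (hNy _ hadj.symm)
          · rintro ⟨u₀, ⟨hu₀, hadj⟩, rfl⟩
            exact ⟨Or.inl ⟨u₀, hu₀, rfl⟩, hadj⟩
        rw [hset, Set.ncard_image_of_injective _ Subtype.val_injective]
        exact hS'sparse z₀ hz₀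
      · rcases hzxy with rfl | rfl
        · have hsub : {u ∈ S | G.Adj z u} ⊆ {y} := by
            rintro z' ⟨hz'S, hadj⟩
            have hz'R : z' ∈ R := hNx z' hadj
            rcases hz'S with hz'im | hz'xy
            · exact absurd hz'R (himgR _ hz'im)
            · rcases hz'xy with rfl | rfl
              · exact absurd hadj (G.irrefl)
              · rfl
          calc ({u ∈ S | G.Adj z u}).ncard ≤ ({y} : Set V).ncard :=
                Set.ncard_le_ncard hsub (Set.finite_singleton _)
            _ = 1 := Set.ncard_singleton _
        · have hsub : {u ∈ S | G.Adj z u} ⊆ {x} := by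
            rintro z' ⟨hz'S, hadj⟩
            have hz'R : z' ∈ R := hNy z' hadj
            rcases hz'S with hz'im | hz'xy
            · exact absurd hz'R (himgR _ hz'im)
            · rcases hz'xy with rfl | rfl
              · rfl
              · exact absurd hadj (G.irrefl)
          calc ({u ∈ S | G.Adj z u}).ncard ≤ ({x} : Set V).ncard :=
                Set.ncard_le_ncard hsub (Set.finite_singleton _)
            _ = 1 := Set.ncard_singleton _
    · rw [hScard]
      have harith : n / 2 + (if n % 4 = 0 then 0 else 1) ≤
          ((n - R.card) / 2 + (if (n - R.card) % 4 = 0 then 0 else 1)) + 2 := by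
        have h4 : R.card ≤ 4 := hR4
        split_ifs <;> omega
      omega
  · push_neg at hedge
    refine ⟨Set.univ, ?_, ?_⟩
    · intro z hz
      have : {u ∈ (Set.univ : Set V) | G.Adj z u} = ∅ := by
        ext z'; simp [hedge z z']
      rw [this]
      simp
    · rw [Set.ncard_univ, Nat.card_eq_fintype_card, hn]
      split_ifs with h
      · omega
      · have : n ≠ 0 := by rintro rfl; simp at h
        omega

end Stmt7Aux

theorem stmt7 {V : Type*} [Fintype V] (G : SimpleGraph V)
    (hcactus : IsCactus G) :
    ∃ S : Set V, KSparse G 1 S ∧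
      Fintype.card V / 2 + (if Fintype.card V % 4 = 0 then 0 else 1) ≤ S.ncard := by
  obtain ⟨S, hS, hcard⟩ := cactus_aux (Fintype.card V) G hcactus rfl
  exact ⟨S, hS, hcard⟩
end

section
/- Every cactus contains a set of pairwise non-adjacent (independent) edges whose removal yields a forest. -/
open SimpleGraph

section CactusAux

variable {V : Type*} {G : SimpleGraph V}

lemma mem_support_of_mem_edge {a b v : V} (p : G.Walk a b) {e : Sym2 V}
    (he : e ∈ p.edges) (hv : v ∈ e) : v ∈ p.support := by
  induction e with
  | _ x y =>
    rcases Sym2.mem_iff.mp hv with rfl | rfl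
    · exact p.fst_mem_support_of_mem_edges he
    · exact p.snd_mem_support_of_mem_edges he

lemma ends_ne_of_nodup {a x b : V} (h' : G.Adj a x) (q' : G.Walk x b)
    (h : (Walk.cons h' q').support.Nodup) : a ≠ b := by
  intro hab
  subst hab
  rw [Walk.support_cons, List.nodup_cons] at h
  exact h.1 q'.end_mem_support

lemma exists_edge_avoid_base {p : V} (c : G.Walk p p) (hc : c.IsCycle) :
    ∃ e ∈ c.edges, p ∉ e := by
  cases c with
  | nil => exact absurd hc Walk.IsCycle.not_of_nil
  | @cons _ y _ h₁ q =>
    have hlen : 2 ≤ q.length := by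
      have := hc.three_le_length
      simpa [Walk.length_cons] using this
    have hnd : q.support.Nodup := by
      have := hc.support_nodup
      simpa [Walk.support_cons] using this
    cases q with
    | nil => simp at hlen
    | @cons _ z _ h₂ q₂ =>
      have hy : y ≠ p := ends_ne_of_nodup h₂ q₂ hnd
      cases q₂ with
      | nil => simp [Walk.length_cons] at hlen
      | @cons _ w _ h₃ q₃ =>
        have hz : z ≠ p := by
          refine ends_ne_of_nodup h₃ q₃ ?_
          rw [Walk.support_cons, List.nodup_cons] at hnd
          exact hnd.2
        refine ⟨s(y, z), by simp [Walk.edges_cons], ?_⟩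
        rw [Sym2.mem_iff]
        rintro (rfl | rfl)
        · exact hy rfl
        · exact hz rfl

lemma exists_edge_avoid {u : V} (c : G.Walk u u) (hc : c.IsCycle) (p : V) :
    ∃ e ∈ c.edges, p ∉ e := by
  classical
  by_cases hp : p ∈ c.support
  · obtain ⟨e, he, hpe⟩ := exists_edge_avoid_base (c.rotate p hp) (hc.rotate hp)
    exact ⟨e, (c.rotate_edges p hp).mem_iff.mp he, hpe⟩
  · have hlen : 0 < c.edges.length := by
      have := hc.three_le_length
      rw [c.length_edges]
      omega
    obtain ⟨e, he⟩ := List.exists_mem_of_length_pos hlen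
    exact ⟨e, he, fun hv => hp (mem_support_of_mem_edge c he hv)⟩

lemma first_hit (D : Set (Sym2 V)) (S : Set V)
    (hDS : ∀ e ∈ D, ∀ v : V, v ∈ e → v ∈ S) :
    ∀ {a b : V} (_W : G.Walk a b), b ∈ S →
      ∃ x ∈ S, (G.deleteEdges D).Reachable a x := by
  intro a b W
  induction W with
  | nil => intro hb; exact ⟨_, hb, Reachable.refl _⟩
  | @cons a a' b h W ih =>
    intro hb
    by_cases ha : a ∈ S
    · exact ⟨a, ha, Reachable.refl _⟩
    · obtain ⟨x, hx, hr⟩ := ih hb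
      have hadj : (G.deleteEdges D).Adj a a' := by
        rw [SimpleGraph.deleteEdges_adj]
        exact ⟨h, fun hD => ha (hDS _ hD a (by simp))⟩
      exact ⟨x, hx, hadj.reachable.trans hr⟩

lemma mem_support_rotate [DecidableEq V] {u x y : V} (c : G.Walk u u) (hx : x ∈ c.support)
    (hy : y ∈ c.support) : y ∈ (c.rotate x hx).support := by
  show y ∈ ((c.dropUntil x hx).append (c.takeUntil x hx)).support
  rw [Walk.mem_support_append_iff]
  rw [← c.take_spec hx, Walk.mem_support_append_iff] at hy
  exact hy.symm

lemma cycle_separates (hG : IsCactus G) {u x y : V} (c : G.Walk u u) (hc : c.IsCycle)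
    (hx : x ∈ c.support) (hy : y ∈ c.support) (hxy : x ≠ y) :
    ¬ (G.deleteEdges {e | e ∈ c.edges}).Reachable x y := by
  classical
  intro hreach
  obtain ⟨W⟩ := hreach
  have hc₁ : (c.rotate x hx).IsCycle := hc.rotate hx
  set c₁ := c.rotate x hx with hc₁def
  have hy₁ : y ∈ c₁.support := mem_support_rotate c hx hy
  have hedges : ∀ e, e ∈ c₁.edges ↔ e ∈ c.edges := fun e => (c.rotate_edges x hx).mem_iff
  set a₁ := c₁.takeUntil y hy₁ with ha₁def
  set a₂ := c₁.dropUntil y hy₁ with ha₂def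
  have hspec : a₁.append a₂ = c₁ := c₁.take_spec hy₁
  have hnd : (a₁.edges ++ a₂.edges).Nodup := by
    rw [← Walk.edges_append, hspec]
    exact hc₁.isTrail.edges_nodup
  obtain ⟨z, hadjxz, t, hteq⟩ := Walk.exists_eq_cons_of_ne hxy a₁
  obtain ⟨w', hadjyw, t', ht'eq⟩ := Walk.exists_eq_cons_of_ne (Ne.symm hxy) a₂
  have hea₁ : s(x, z) ∈ a₁.edges := by rw [hteq]; simp
  have hfa₂ : s(y, w') ∈ a₂.edges := by rw [ht'eq]; simp
  have he₁ : s(x, z) ∈ c₁.edges := by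
    rw [← hspec, Walk.edges_append]; exact List.mem_append_left _ hea₁
  have hf₁ : s(y, w') ∈ c₁.edges := by
    rw [← hspec, Walk.edges_append]; exact List.mem_append_right _ hfa₂
  have hfna₁ : s(y, w') ∉ a₁.edges := by
    intro hmem
    exact (List.disjoint_of_nodup_append hnd) hmem hfa₂
  have hent : s(x, z) ∉ t.edges := by
    have : a₁.edges.Nodup := (List.nodup_append.mp hnd).1
    rw [hteq, Walk.edges_cons, List.nodup_cons] at this
    exact this.1
  -- the auxiliary graph
  set D : Set (Sym2 V) := {e | e ∈ c₁.edges ∧ e ∉ a₁.edges} with hDdef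
  set G' := G.deleteEdges D with hG'def
  have hG'le : G' ≤ G := G.deleteEdges_le D
  have hadj' : G'.Adj x z := by
    rw [hG'def, SimpleGraph.deleteEdges_adj]
    exact ⟨hadjxz, fun hD => hD.2 hea₁⟩
  -- reachability in G' minus the edge s(x,z)
  have hWedge : ∀ e ∈ W.edges, e ∈ (G'.deleteEdges {s(x, z)}).edgeSet := by
    intro e heW
    have heG : e ∈ (G.deleteEdges {e | e ∈ c.edges}).edgeSet := W.edges_subset_edgeSet heW
    rw [SimpleGraph.edgeSet_deleteEdges] at heG
    rw [SimpleGraph.edgeSet_deleteEdges, hG'def, SimpleGraph.edgeSet_deleteEdges]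
    refine ⟨⟨heG.1, fun hD => heG.2 ((hedges e).mp hD.1)⟩, ?_⟩
    intro hee
    rw [Set.mem_singleton_iff] at hee
    subst hee
    exact heG.2 ((hedges _).mp he₁)
  have htedge : ∀ e ∈ t.reverse.edges, e ∈ (G'.deleteEdges {s(x, z)}).edgeSet := by
    intro e het
    rw [Walk.edges_reverse, List.mem_reverse] at het
    have hea : e ∈ a₁.edges := by rw [hteq, Walk.edges_cons]; exact List.mem_cons_of_mem _ het
    rw [SimpleGraph.edgeSet_deleteEdges, hG'def, SimpleGraph.edgeSet_deleteEdges]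
    refine ⟨⟨a₁.edges_subset_edgeSet hea, fun hD => hD.2 hea⟩, ?_⟩
    intro hee
    rw [Set.mem_singleton_iff] at hee
    subst hee
    exact hent het
  have hreach' : (G'.deleteEdges {s(x, z)}).Reachable x z :=
    ⟨(W.transfer _ hWedge).append (t.reverse.transfer _ htedge)⟩
  obtain ⟨v₀, p, hp, hep⟩ :=
    (SimpleGraph.adj_and_reachable_delete_edges_iff_exists_cycle (G := G')).mp ⟨hadj', hreach'⟩
  -- lift p to G
  have hpedges : ∀ e ∈ p.edges, e ∈ G.edgeSet := fun e he =>
    SimpleGraph.edgeSet_mono hG'le (p.edges_subset_edgeSet he)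
  have hpG : (p.transfer G hpedges).IsCycle := hp.transfer hpedges
  have hshare : ∃ e, e ∈ (p.transfer G hpedges).edges ∧ e ∈ c₁.edges := by
    refine ⟨s(x, z), ?_, he₁⟩
    rw [Walk.edges_transfer]
    exact hep
  have hsame := hG _ _ (p.transfer G hpedges) c₁ hpG hc₁ hshare
  have hfp : s(y, w') ∈ p.edges := by
    have := (hsame s(y, w')).mpr hf₁
    rwa [Walk.edges_transfer] at this
  have : s(y, w') ∈ G'.edgeSet := p.edges_subset_edgeSet hfp
  rw [hG'def, SimpleGraph.edgeSet_deleteEdges] at this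
  exact this.2 ⟨hf₁, hfna₁⟩

end CactusAux

section CactusMain

variable {V : Type*} {G : SimpleGraph V}

/-- The set of edge sets of cycles of `G`. -/
def cycSets (G : SimpleGraph V) : Set (Set (Sym2 V)) :=
  {C | ∃ (u : V) (c : G.Walk u u), c.IsCycle ∧ C = {e | e ∈ c.edges}}

variable {C C' : Set (Sym2 V)}

noncomputable def cycVert (hC : C ∈ cycSets G) : V := hC.choose

noncomputable def cycWalk (hC : C ∈ cycSets G) : G.Walk (cycVert hC) (cycVert hC) :=
  hC.choose_spec.choose

lemma cycWalk_isCycle (hC : C ∈ cycSets G) : (cycWalk hC).IsCycle :=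
  hC.choose_spec.choose_spec.1

lemma cycWalk_edges (hC : C ∈ cycSets G) : C = {e | e ∈ (cycWalk hC).edges} :=
  hC.choose_spec.choose_spec.2

noncomputable def cycRoot (hC : C ∈ cycSets G) : V :=
  (G.connectedComponentMk (cycVert hC)).out

lemma cycRoot_reachable (hC : C ∈ cycSets G) : G.Reachable (cycRoot hC) (cycVert hC) := by
  apply SimpleGraph.ConnectedComponent.exact
  exact Quot.out_eq _

lemma cyc_edge_endpoints (hC : C ∈ cycSets G) :
    ∀ e ∈ C, ∀ v : V, v ∈ e → v ∈ {w | w ∈ (cycWalk hC).support} := by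
  intro e he v hv
  rw [cycWalk_edges hC] at he
  exact mem_support_of_mem_edge _ he hv

lemma gate_exists (hC : C ∈ cycSets G) :
    ∃ x ∈ {w | w ∈ (cycWalk hC).support}, (G.deleteEdges C).Reachable (cycRoot hC) x := by
  obtain ⟨W⟩ := cycRoot_reachable hC
  exact first_hit C _ (cyc_edge_endpoints hC) W (cycWalk hC).start_mem_support

noncomputable def cycGate (hC : C ∈ cycSets G) : V := (gate_exists hC).choose

lemma cycGate_mem (hC : C ∈ cycSets G) : cycGate hC ∈ (cycWalk hC).support :=
  (gate_exists hC).choose_spec.1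

lemma cycGate_reachable (hC : C ∈ cycSets G) :
    (G.deleteEdges C).Reachable (cycRoot hC) (cycGate hC) :=
  (gate_exists hC).choose_spec.2

noncomputable def cycEdge (hC : C ∈ cycSets G) : Sym2 V :=
  (exists_edge_avoid (cycWalk hC) (cycWalk_isCycle hC) (cycGate hC)).choose

lemma cycEdge_mem (hC : C ∈ cycSets G) : cycEdge hC ∈ (cycWalk hC).edges :=
  (exists_edge_avoid (cycWalk hC) (cycWalk_isCycle hC) (cycGate hC)).choose_spec.1

lemma cycGate_not_mem_cycEdge (hC : C ∈ cycSets G) : cycGate hC ∉ cycEdge hC :=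
  (exists_edge_avoid (cycWalk hC) (cycWalk_isCycle hC) (cycGate hC)).choose_spec.2

lemma gate_unique (hG : IsCactus G) (hC : C ∈ cycSets G) {x : V}
    (hx : x ∈ (cycWalk hC).support)
    (hrx : (G.deleteEdges C).Reachable (cycRoot hC) x) : x = cycGate hC := by
  by_contra hne
  have hsep := cycle_separates hG (cycWalk hC) (cycWalk_isCycle hC) hx (cycGate_mem hC) hne
  rw [← cycWalk_edges hC] at hsep
  exact hsep (hrx.symm.trans (cycGate_reachable hC))

lemma cyc_disjoint (hG : IsCactus G) (hC : C ∈ cycSets G) (hC' : C' ∈ cycSets G)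
    (hne : C ≠ C') : ∀ e ∈ C, e ∉ C' := by
  intro e he he'
  apply hne
  have he2 := he
  rw [cycWalk_edges hC] at he2
  have he2' := he'
  rw [cycWalk_edges hC'] at he2'
  have := hG _ _ (cycWalk hC) (cycWalk hC') (cycWalk_isCycle hC) (cycWalk_isCycle hC')
    ⟨e, he2, he2'⟩
  rw [cycWalk_edges hC, cycWalk_edges hC']
  ext f
  exact this f

lemma cycRoot_eq (hC : C ∈ cycSets G) (hC' : C' ∈ cycSets G) {v : V}
    (hv : v ∈ (cycWalk hC).support) (hv' : v ∈ (cycWalk hC').support) :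
    cycRoot hC = cycRoot hC' := by
  classical
  have h1 : G.Reachable (cycVert hC) v := ⟨(cycWalk hC).takeUntil v hv⟩
  have h2 : G.Reachable (cycVert hC') v := ⟨(cycWalk hC').takeUntil v hv'⟩
  unfold cycRoot
  congr 1
  exact SimpleGraph.ConnectedComponent.sound (h1.trans h2.symm)

lemma shared_gate_aux (hG : IsCactus G) (hC : C ∈ cycSets G) (hC' : C' ∈ cycSets G)
    (hdisj : ∀ e ∈ C, e ∉ C') {v x : V}
    (hv : v ∈ (cycWalk hC).support) (hv' : v ∈ (cycWalk hC').support)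
    (hx : x ∈ (cycWalk hC).support)
    (hr : (G.deleteEdges (C ∪ C')).Reachable (cycRoot hC') x) : v = cycGate hC' := by
  classical
  have hr1 : (G.deleteEdges C').Reachable (cycRoot hC') x :=
    hr.mono (G.deleteEdges_anti Set.subset_union_right)
  -- arc from x to v along the cycle of C
  have hvR : v ∈ ((cycWalk hC).rotate x hx).support := mem_support_rotate _ hx hv
  set arc := (((cycWalk hC).rotate x hx).takeUntil v hvR) with harc
  have harcC : ∀ e ∈ arc.edges, e ∈ C := by
    intro e he
    have : e ∈ ((cycWalk hC).rotate x hx).edges := Walk.edges_takeUntil_subset _ _ he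
    rw [cycWalk_edges hC]
    exact (((cycWalk hC).rotate_edges x hx).mem_iff).mp this
  have harcG : ∀ e ∈ arc.edges, e ∈ (G.deleteEdges C').edgeSet := by
    intro e he
    rw [SimpleGraph.edgeSet_deleteEdges]
    exact ⟨arc.edges_subset_edgeSet he, hdisj e (harcC e he)⟩
  have hr2 : (G.deleteEdges C').Reachable (cycRoot hC') v :=
    hr1.trans ⟨arc.transfer _ harcG⟩
  exact gate_unique hG hC' hv' hr2

lemma shared_gate (hG : IsCactus G) (hC : C ∈ cycSets G) (hC' : C' ∈ cycSets G)
    (hne : C ≠ C') {v : V}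
    (hv : v ∈ (cycWalk hC).support) (hv' : v ∈ (cycWalk hC').support) :
    v = cycGate hC ∨ v = cycGate hC' := by
  classical
  have hdisj := cyc_disjoint hG hC hC' hne
  have hdisj' := cyc_disjoint hG hC' hC (Ne.symm hne)
  have hroot : cycRoot hC = cycRoot hC' := cycRoot_eq hC hC' hv hv'
  have hrv : G.Reachable (cycRoot hC) v :=
    (cycRoot_reachable hC).trans ⟨(cycWalk hC).takeUntil v hv⟩
  obtain ⟨W⟩ := hrv
  have hDS : ∀ e ∈ C ∪ C', ∀ w : V, w ∈ e →
      w ∈ {w | w ∈ (cycWalk hC).support ∨ w ∈ (cycWalk hC').support} := by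
    rintro e (he | he) w hw
    · exact Or.inl (cyc_edge_endpoints hC e he w hw)
    · exact Or.inr (cyc_edge_endpoints hC' e he w hw)
  obtain ⟨x, hx, hr⟩ := first_hit (C ∪ C') _ hDS W (Or.inl hv)
  rcases hx with hx | hx
  · right
    rw [hroot] at hr
    exact shared_gate_aux hG hC hC' hdisj hv hv' hx hr
  · left
    rw [Set.union_comm] at hr
    exact shared_gate_aux hG hC' hC hdisj' hv' hv hx hr

end CactusMain


theorem stmt9 {V : Type*} (G : SimpleGraph V) (hcactus : IsCactus G) :
    ∃ M : Set (Sym2 V), M ⊆ G.edgeSet ∧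
      (∀ e ∈ M, ∀ f ∈ M, e ≠ f → ∀ v : V, v ∈ e → v ∉ f) ∧
      (G.deleteEdges M).IsAcyclic := by
  classical
  refine ⟨{e | ∃ C, ∃ hC : C ∈ cycSets G, e = cycEdge hC}, ?_, ?_, ?_⟩
  · rintro e ⟨C, hC, rfl⟩
    exact (cycWalk hC).edges_subset_edgeSet (cycEdge_mem hC)
  · rintro e ⟨C, hC, rfl⟩ f ⟨C', hC', rfl⟩ hef v hve hvf
    rcases eq_or_ne C C' with rfl | hne
    · exact hef rfl
    · have hv : v ∈ (cycWalk hC).support :=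
        mem_support_of_mem_edge _ (cycEdge_mem hC) hve
      have hv' : v ∈ (cycWalk hC').support :=
        mem_support_of_mem_edge _ (cycEdge_mem hC') hvf
      rcases shared_gate hcactus hC hC' hne hv hv' with h | h
      · exact cycGate_not_mem_cycEdge hC (h ▸ hve)
      · exact cycGate_not_mem_cycEdge hC' (h ▸ hvf)
  · intro w p hp
    have hpedges : ∀ e ∈ p.edges, e ∈ G.edgeSet := fun e he =>
      SimpleGraph.edgeSet_mono (G.deleteEdges_le _) (p.edges_subset_edgeSet he)
    have hpG : (p.transfer G hpedges).IsCycle := hp.transfer hpedges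
    have hC : {e | e ∈ (p.transfer G hpedges).edges} ∈ cycSets G :=
      ⟨w, p.transfer G hpedges, hpG, rfl⟩
    have h1 : cycEdge hC ∈ {e | ∃ C, ∃ hC : C ∈ cycSets G, e = cycEdge hC} := ⟨_, hC, rfl⟩
    have h3 : cycEdge hC ∈ {e | e ∈ (p.transfer G hpedges).edges} :=
      (Set.ext_iff.mp (cycWalk_edges hC) _).mpr (cycEdge_mem hC)
    have hiff : ∀ f : Sym2 V, f ∈ (p.transfer G hpedges).edges → f ∈ p.edges := by
      intro f hf
      rwa [Walk.edges_transfer] at hf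
    have h2 : cycEdge hC ∈ p.edges := hiff _ h3
    have h4 := p.edges_subset_edgeSet h2
    rw [SimpleGraph.edgeSet_deleteEdges] at h4
    exact h4.2 h1
end

section
/- For all i ≥ 5 and j ≥ 3, the 1-defective Ramsey number for bipartite graphs equals 2j−1. In particular: no bipartite graph contains a 1-dense set of size 5, and the complete bipartite graph K_{j−1,j−1} (on 2j−2 vertices) has no 1-sparse set of size j. -/
open SimpleGraph

/-! In a `c`-colourable graph a `k`-dense set meets each colour class in at most `k + 1`
vertices, since a vertex of a larger intersection would have `k + 1` non-neighbours in the set;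
so a 1-dense set of a bipartite graph has at most four vertices. The larger colour class of a
bipartite graph on `2j - 1` vertices is independent of size `j`, hence 1-sparse. In
`K_{j-1,j-1}` a 1-sparse set meeting both sides has at most one vertex on each side, and otherwise
lies in a side of size `j - 1`. -/

namespace SimpleGraph

variable {V : Type*} {G : SimpleGraph V}

lemma IsIndepSet.kSparse {S : Set V} (hS : G.IsIndepSet S) (k : ℕ) : KSparse G k S := by
  intro v hv
  have hnbrs : {u ∈ S | G.Adj v u} = ∅ :=
    Set.eq_empty_of_forall_notMem fun u ⟨hu, hvu⟩ => hS hv hu hvu.ne hvu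
  simp [hnbrs]

lemma Colorable.exists_isIndepSet_card_eq [Fintype V] {c m : ℕ} (hG : G.Colorable c)
    (h : c * m < Fintype.card V) : ∃ s : Finset V, s.card = m + 1 ∧ G.IsIndepSet (s : Set V) := by
  obtain ⟨C⟩ := hG
  obtain ⟨b, -, hb⟩ := Finset.exists_lt_card_fiber_of_mul_lt_card_of_maps_to
    (s := Finset.univ) (t := Finset.univ) (f := C) (fun v _ => Finset.mem_univ (C v))
    (by simpa using h)
  obtain ⟨s, hs, hcard⟩ := Finset.exists_subset_card_eq hb
  exact ⟨s, hcard, (C.isIndepSet_colorClass b).mono fun v hv => (Finset.mem_filter.mp (hs hv)).2⟩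

lemma Colorable.hasKSparse [Fintype V] {c m : ℕ} (hG : G.Colorable c)
    (h : c * m < Fintype.card V) (k : ℕ) : HasKSparse G k (m + 1) := by
  obtain ⟨s, hcard, hs⟩ := hG.exists_isIndepSet_card_eq h
  exact ⟨s, by rw [Set.ncard_coe_finset, hcard], hs.kSparse k⟩

lemma KDense.ncard_inter_le {k : ℕ} {D S : Set V} (hD : KDense G k D) (hfin : D.Finite)
    (hS : G.IsIndepSet S) : (D ∩ S).ncard ≤ k + 1 := by
  by_contra! hlarge
  obtain ⟨u, hu⟩ := Set.nonempty_of_ncard_ne_zero (by omega : (D ∩ S).ncard ≠ 0)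
  have hsub : (D ∩ S) \ {u} ⊆ {x ∈ D | Gᶜ.Adj u x} := fun x ⟨hx, hxu⟩ =>
    ⟨hx.1, Ne.symm hxu, hS hu.2 hx.2 (Ne.symm hxu)⟩
  have hle := Set.ncard_le_ncard hsub (hfin.subset fun x hx => hx.1)
  rw [Set.ncard_sdiff_singleton_of_mem hu] at hle
  have := hD u hu.1
  omega

lemma KDense.ncard_le_of_colorable {c k : ℕ} {D : Set V} (hG : G.Colorable c)
    (hD : KDense G k D) : D.ncard ≤ c * (k + 1) := by
  rcases D.finite_or_infinite with hfin | hinf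
  · obtain ⟨C⟩ := hG
    rw [Set.ncard_eq_toFinset_card D hfin, mul_comm]
    convert Finset.card_le_mul_card_image_of_maps_to (t := Finset.univ) (f := C)
      (fun v _ => Finset.mem_univ (C v)) (k + 1) fun b _ => ?_
    · simp
    rw [← Set.ncard_coe_finset]
    convert hD.ncard_inter_le hfin (C.isIndepSet_colorClass b) using 2
    ext v
    simp [Coloring.colorClass]
  · simp [hinf.ncard]

lemma Colorable.not_hasKDense {c k i : ℕ} (hG : G.Colorable c) (h : c * (k + 1) < i) :
    ¬ HasKDense G k i := by
  rintro ⟨D, hcard, hD⟩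
  have := hD.ncard_le_of_colorable hG
  omega

lemma HasKSparse.of_iso {W : Type*} {H : SimpleGraph W} {k j : ℕ} (e : G ≃g H)
    (h : HasKSparse G k j) : HasKSparse H k j := by
  obtain ⟨S, hcard, hS⟩ := h
  refine ⟨e '' S, by rw [Set.ncard_image_of_injective _ e.injective, hcard], ?_⟩
  rintro _ ⟨v, hv, rfl⟩
  have hnbrs : {u ∈ e '' S | H.Adj (e v) u} = e '' {u ∈ S | G.Adj v u} := by
    ext u
    constructor
    · rintro ⟨⟨u, hu, rfl⟩, hadj⟩
      exact ⟨u, ⟨hu, e.map_adj_iff.mp hadj⟩, rfl⟩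
    · rintro ⟨u, ⟨hu, hadj⟩, rfl⟩
      exact ⟨⟨u, hu, rfl⟩, e.map_adj_iff.mpr hadj⟩
  rw [hnbrs, Set.ncard_image_of_injective _ e.injective]
  exact hS v hv

lemma KSparse.ncard_le_of_completeBipartiteGraph {α β : Type*} [Finite α] [Finite β] {k : ℕ}
    {S : Set (α ⊕ β)} (hS : KSparse (completeBipartiteGraph α β) k S) :
    S.ncard ≤ max (2 * k) (max (Nat.card α) (Nat.card β)) := by
  by_cases hL : S ⊆ Set.range Sum.inl
  · rw [← Set.ncard_preimage_of_injective_subset_range Sum.inl_injective hL]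
    have := Set.ncard_le_card (Sum.inl ⁻¹' S)
    omega
  by_cases hR : S ⊆ Set.range Sum.inr
  · rw [← Set.ncard_preimage_of_injective_subset_range Sum.inr_injective hR]
    have := Set.ncard_le_card (Sum.inr ⁻¹' S)
    omega
  obtain ⟨_ | b, hb, hbL⟩ := Set.not_subset.mp hL
  · exact absurd ⟨_, rfl⟩ hbL
  obtain ⟨a | _, ha, haR⟩ := Set.not_subset.mp hR
  · have hcover : S = {u ∈ S | (completeBipartiteGraph α β).Adj (Sum.inl a) u} ∪
        {u ∈ S | (completeBipartiteGraph α β).Adj (Sum.inr b) u} := by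
      ext (x | x) <;> simp
    have hunion := hcover ▸ Set.ncard_union_le _ _
    have := hS _ ha
    have := hS _ hb
    omega
  · exact absurd ⟨_, rfl⟩ haR

lemma not_hasKSparse_completeBipartiteGraph {α β : Type*} [Finite α] [Finite β] {k j : ℕ}
    (h : max (2 * k) (max (Nat.card α) (Nat.card β)) < j) :
    ¬ HasKSparse (completeBipartiteGraph α β) k j := by
  rintro ⟨S, hcard, hS⟩
  have := hS.ncard_le_of_completeBipartiteGraph
  omega

end SimpleGraph

theorem stmt13 (i j : ℕ) (hi : 5 ≤ i) (hj : 3 ≤ j) :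
    (∀ G : SimpleGraph (Fin (2 * j - 1)), G.Colorable 2 →
        HasKDense G 1 i ∨ HasKSparse G 1 j) ∧
    (∃ G : SimpleGraph (Fin (2 * j - 2)),
        G.Colorable 2 ∧ ¬ HasKDense G 1 i ∧ ¬ HasKSparse G 1 j) ∧
    (∀ (n : ℕ) (G : SimpleGraph (Fin n)), G.Colorable 2 → ¬ HasKDense G 1 5) ∧
    ¬ HasKSparse (completeBipartiteGraph (Fin (j - 1)) (Fin (j - 1))) 1 j := by
  set K := completeBipartiteGraph (Fin (j - 1)) (Fin (j - 1))
  have hK : ¬ HasKSparse K 1 j := not_hasKSparse_completeBipartiteGraph (by simp; omega)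
  let e : Fin (2 * j - 2) ≃ Fin (j - 1) ⊕ Fin (j - 1) :=
    (finCongr (by omega)).trans finSumFinEquiv.symm
  have hKcol : (K.comap e).Colorable 2 :=
    Colorable.of_hom (Iso.comap e K).toHom (CompleteBipartiteGraph.bicoloring _ _).colorable
  have hsparse (G : SimpleGraph (Fin (2 * j - 1))) (hG : G.Colorable 2) : HasKSparse G 1 j := by
    simpa [Nat.sub_add_cancel (by omega : 1 ≤ j)] using
      hG.hasKSparse (m := j - 1) (by simp; omega) 1
  exact ⟨fun G hG => .inr (hsparse G hG),
    ⟨K.comap e, hKcol, hKcol.not_hasKDense (by omega), fun h => hK (h.of_iso (Iso.comap e K))⟩,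
    fun n G hG => hG.not_hasKDense (by norm_num), hK⟩
end

section
/- Every bipartite graph on 2j−3 vertices, for j ∈ {4,5,6}, contains a 1-dense 4-set or a 1-sparse j-set; moreover K_{1,3}, the 6-cycle C_6, and the 8-cycle C_8 show this bound is tight, so R_1^BIP(4,j) = 2j−3 for j ∈ {4,5,6}. -/
open SimpleGraph

/-! ### Auxiliary material -/

def fkey {p : ℕ} (s : Finset (Fin p)) : ℕ := s.sum (fun a => 2 ^ a.val)

set_option maxHeartbeats 4000000 in
lemma core2' : ∀ m0 : Finset (Fin 3), 2 ≤ m0.card →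
    ∀ m1 : Finset (Fin 3), fkey m0 ≤ fkey m1 → 2 ≤ m1.card → (m0 ∩ m1).card ≤ 1 →
    ∃ bs : Finset (Fin 2), ∃ as : Finset (Fin 3),
      bs.card + as.card = 4 ∧
      (∀ i ∈ bs, ((![m0, m1] i) ∩ as).card ≤ 1) ∧
      (∀ a ∈ as, (bs.filter (fun i => a ∈ ![m0, m1] i)).card ≤ 1) := by decide

set_option maxHeartbeats 16000000 in
lemma core3' : ∀ m0 : Finset (Fin 4), 2 ≤ m0.card →
    ∀ m1 : Finset (Fin 4), fkey m0 ≤ fkey m1 → 2 ≤ m1.card → (m0 ∩ m1).card ≤ 1 →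
    ∀ m2 : Finset (Fin 4), fkey m1 ≤ fkey m2 → 2 ≤ m2.card → (m0 ∩ m2).card ≤ 1 →
      (m1 ∩ m2).card ≤ 1 →
    ∃ bs : Finset (Fin 3), ∃ as : Finset (Fin 4),
      bs.card + as.card = 5 ∧
      (∀ i ∈ bs, ((![m0, m1, m2] i) ∩ as).card ≤ 1) ∧
      (∀ a ∈ as, (bs.filter (fun i => a ∈ ![m0, m1, m2] i)).card ≤ 1) := by decide

set_option maxHeartbeats 1000000000 in
set_option maxRecDepth 100000 in
lemma core4' : ∀ m0 : Finset (Fin 5), 2 ≤ m0.card →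
    ∀ m1 : Finset (Fin 5), fkey m0 ≤ fkey m1 → 2 ≤ m1.card → (m0 ∩ m1).card ≤ 1 →
    ∀ m2 : Finset (Fin 5), fkey m1 ≤ fkey m2 → 2 ≤ m2.card → (m0 ∩ m2).card ≤ 1 →
      (m1 ∩ m2).card ≤ 1 →
    ∀ m3 : Finset (Fin 5), fkey m2 ≤ fkey m3 → 2 ≤ m3.card → (m0 ∩ m3).card ≤ 1 →
      (m1 ∩ m3).card ≤ 1 → (m2 ∩ m3).card ≤ 1 →
    ∃ bs : Finset (Fin 4), ∃ as : Finset (Fin 5),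
      bs.card + as.card = 6 ∧
      (∀ i ∈ bs, ((![m0, m1, m2, m3] i) ∩ as).card ≤ 1) ∧
      (∀ a ∈ as, (bs.filter (fun i => a ∈ ![m0, m1, m2, m3] i)).card ≤ 1) := by decide

/-- The core combinatorial fact used for the Ramsey-type bound. -/
def CoreProp (q : ℕ) : Prop :=
  ∀ f : Fin q → Finset (Fin (q + 1)),
    (∀ i, 2 ≤ (f i).card) →
    (∀ i k, i ≠ k → ((f i) ∩ (f k)).card ≤ 1) →
    ∃ bs : Finset (Fin q), ∃ as : Finset (Fin (q + 1)),
      bs.card + as.card = q + 2 ∧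
      (∀ i ∈ bs, ((f i) ∩ as).card ≤ 1) ∧
      (∀ a ∈ as, (bs.filter (fun i => a ∈ f i)).card ≤ 1)

lemma coreProp2 : CoreProp 2 := by
  intro f hdeg hcod
  set σ := Tuple.sort (fun i => fkey (f i)) with hσdef
  have hm : Monotone ((fun i => fkey (f i)) ∘ σ) := Tuple.monotone_sort _
  have hne : ∀ i k : Fin 2, i ≠ k → (f (σ i) ∩ f (σ k)).card ≤ 1 :=
    fun i k h => hcod _ _ (fun e => h (σ.injective e))
  obtain ⟨bs, as, h1, h2, h3⟩ :=
    core2' (f (σ 0)) (hdeg _)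
      (f (σ 1)) (hm (by decide : (0 : Fin 2) ≤ 1)) (hdeg _) (hne 0 1 (by decide))
  have hmat : ∀ i : Fin 2, ![f (σ 0), f (σ 1)] i = f (σ i) := by
    intro i; fin_cases i <;> rfl
  refine ⟨bs.image σ, as, ?_, ?_, ?_⟩
  · rwa [Finset.card_image_of_injective _ σ.injective]
  · intro i hi
    obtain ⟨i₀, hi₀, rfl⟩ := Finset.mem_image.mp hi
    have := h2 i₀ hi₀; rwa [hmat] at this
  · intro a ha
    have := h3 a ha
    rw [Finset.filter_image, Finset.card_image_of_injective _ σ.injective]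
    calc (bs.filter (fun i => a ∈ f (σ i))).card
        = (bs.filter (fun i => a ∈ ![f (σ 0), f (σ 1)] i)).card := by
          apply congrArg; apply Finset.filter_congr; intro i _; simp [hmat]
      _ ≤ 1 := this

lemma coreProp3 : CoreProp 3 := by
  intro f hdeg hcod
  set σ := Tuple.sort (fun i => fkey (f i)) with hσdef
  have hm : Monotone ((fun i => fkey (f i)) ∘ σ) := Tuple.monotone_sort _
  have hne : ∀ i k : Fin 3, i ≠ k → (f (σ i) ∩ f (σ k)).card ≤ 1 :=
    fun i k h => hcod _ _ (fun e => h (σ.injective e))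
  obtain ⟨bs, as, h1, h2, h3⟩ :=
    core3' (f (σ 0)) (hdeg _)
      (f (σ 1)) (hm (by decide : (0 : Fin 3) ≤ 1)) (hdeg _) (hne 0 1 (by decide))
      (f (σ 2)) (hm (by decide : (1 : Fin 3) ≤ 2)) (hdeg _) (hne 0 2 (by decide))
        (hne 1 2 (by decide))
  have hmat : ∀ i : Fin 3, ![f (σ 0), f (σ 1), f (σ 2)] i = f (σ i) := by
    intro i; fin_cases i <;> rfl
  refine ⟨bs.image σ, as, ?_, ?_, ?_⟩
  · rwa [Finset.card_image_of_injective _ σ.injective]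
  · intro i hi
    obtain ⟨i₀, hi₀, rfl⟩ := Finset.mem_image.mp hi
    have := h2 i₀ hi₀; rwa [hmat] at this
  · intro a ha
    have := h3 a ha
    rw [Finset.filter_image, Finset.card_image_of_injective _ σ.injective]
    calc (bs.filter (fun i => a ∈ f (σ i))).card
        = (bs.filter (fun i => a ∈ ![f (σ 0), f (σ 1), f (σ 2)] i)).card := by
          apply congrArg; apply Finset.filter_congr; intro i _; simp [hmat]
      _ ≤ 1 := this

lemma coreProp4 : CoreProp 4 := by
  intro f hdeg hcod
  set σ := Tuple.sort (fun i => fkey (f i)) with hσdef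
  have hm : Monotone ((fun i => fkey (f i)) ∘ σ) := Tuple.monotone_sort _
  have hne : ∀ i k : Fin 4, i ≠ k → (f (σ i) ∩ f (σ k)).card ≤ 1 :=
    fun i k h => hcod _ _ (fun e => h (σ.injective e))
  obtain ⟨bs, as, h1, h2, h3⟩ :=
    core4' (f (σ 0)) (hdeg _)
      (f (σ 1)) (hm (by decide : (0 : Fin 4) ≤ 1)) (hdeg _) (hne 0 1 (by decide))
      (f (σ 2)) (hm (by decide : (1 : Fin 4) ≤ 2)) (hdeg _) (hne 0 2 (by decide))
        (hne 1 2 (by decide))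
      (f (σ 3)) (hm (by decide : (2 : Fin 4) ≤ 3)) (hdeg _) (hne 0 3 (by decide))
        (hne 1 3 (by decide)) (hne 2 3 (by decide))
  have hmat : ∀ i : Fin 4, ![f (σ 0), f (σ 1), f (σ 2), f (σ 3)] i = f (σ i) := by
    intro i; fin_cases i <;> rfl
  refine ⟨bs.image σ, as, ?_, ?_, ?_⟩
  · rwa [Finset.card_image_of_injective _ σ.injective]
  · intro i hi
    obtain ⟨i₀, hi₀, rfl⟩ := Finset.mem_image.mp hi
    have := h2 i₀ hi₀; rwa [hmat] at this
  · intro a ha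
    have := h3 a ha
    rw [Finset.filter_image, Finset.card_image_of_injective _ σ.injective]
    calc (bs.filter (fun i => a ∈ f (σ i))).card
        = (bs.filter (fun i => a ∈ ![f (σ 0), f (σ 1), f (σ 2), f (σ 3)] i)).card := by
          apply congrArg; apply Finset.filter_congr; intro i _; simp [hmat]
      _ ≤ 1 := this

lemma hasKSparse_iff {V : Type*} [Fintype V] [DecidableEq V] (G : SimpleGraph V)
    [DecidableRel G.Adj] (k j : ℕ) :
    HasKSparse G k j ↔
      ∃ s : Finset V, s.card = j ∧ ∀ v ∈ s, (s.filter (fun u => G.Adj v u)).card ≤ k := by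
  constructor
  · rintro ⟨S, h1, h2⟩
    have hS : S.Finite := S.toFinite
    refine ⟨hS.toFinset, ?_, ?_⟩
    · rwa [Set.ncard_eq_toFinset_card _ hS] at h1
    · intro v hv
      have hv' : v ∈ S := hS.mem_toFinset.mp hv
      have he : {u ∈ S | G.Adj v u} = ↑(hS.toFinset.filter (fun u => G.Adj v u)) := by
        ext u; simp [Set.Finite.mem_toFinset]
      have := h2 v hv'
      rwa [he, Set.ncard_coe_finset] at this
  · rintro ⟨s, h1, h2⟩
    refine ⟨↑s, by rwa [Set.ncard_coe_finset], ?_⟩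
    intro v hv
    have he : {u ∈ (↑s : Set V) | G.Adj v u} = ↑(s.filter (fun u => G.Adj v u)) := by
      ext u; simp
    rw [he, Set.ncard_coe_finset]
    exact h2 v hv

lemma hasKDense_iff_sparse_compl {V : Type*} (G : SimpleGraph V) (k i : ℕ) :
    HasKDense G k i ↔ HasKSparse Gᶜ k i := Iff.rfl

lemma card_index {V : Type*} [DecidableEq V] {s : Finset V} {n : ℕ} (h : s.card = n)
    (p : V → Prop) [DecidablePred p] :
    (Finset.univ.filter (fun x : Fin n => p ((s.equivFinOfCardEq h).symm x).val)).card
      = (s.filter p).card := by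
  set e := (s.equivFinOfCardEq h).symm
  apply Finset.card_bij (fun x _ => (e x).val)
  · intro x hx
    simp only [Finset.mem_filter] at hx ⊢
    exact ⟨(e x).2, hx.2⟩
  · intro x hx y hy hxy
    exact e.injective (Subtype.val_injective hxy)
  · intro v hv
    simp only [Finset.mem_filter] at hv
    refine ⟨e.symm ⟨v, hv.1⟩, ?_, ?_⟩
    · simp only [Finset.mem_filter, Finset.mem_univ, true_and, Equiv.apply_symm_apply]
      exact hv.2
    · simp [Equiv.apply_symm_apply]

lemma inner_lemma {V : Type*} [Fintype V] [DecidableEq V] {q : ℕ} (hq : CoreProp q)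
    (G : SimpleGraph V) [DecidableRel G.Adj]
    (A B : Finset V) (hdisj : Disjoint A B)
    (hA : A.card = q + 1) (hB : B.card = q)
    (hAI : ∀ v ∈ A, ∀ w ∈ A, ¬ G.Adj v w) (hBI : ∀ v ∈ B, ∀ w ∈ B, ¬ G.Adj v w) :
    HasKDense G 1 4 ∨ HasKSparse G 1 (q + 2) := by
  classical
  by_cases hb : ∃ b ∈ B, (A.filter (fun u => G.Adj b u)).card ≤ 1
  · right
    rw [hasKSparse_iff]
    obtain ⟨b, hbB, hdeg⟩ := hb
    have hbA : b ∉ A := fun h => (Finset.disjoint_left.mp hdisj h) hbB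
    refine ⟨insert b A, by rw [Finset.card_insert_of_notMem hbA, hA], ?_⟩
    intro v hv
    rcases Finset.mem_insert.mp hv with rfl | hvA
    · refine le_trans (Finset.card_le_card ?_) hdeg
      intro u hu
      simp only [Finset.mem_filter, Finset.mem_insert] at hu ⊢
      rcases hu.1 with rfl | huA
      · exact absurd hu.2 (G.irrefl)
      · exact ⟨huA, hu.2⟩
    · refine le_trans (Finset.card_le_card (t := {b}) ?_) (by simp)
      intro u hu
      simp only [Finset.mem_filter, Finset.mem_insert] at hu
      rcases hu.1 with rfl | huA
      · exact Finset.mem_singleton_self _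
      · exact absurd hu.2 (hAI v hvA u huA)
  · push_neg at hb
    have hb2 : ∀ b ∈ B, 2 ≤ (A.filter (fun u => G.Adj b u)).card := by
      intro b hbB; have := hb b hbB; omega
    by_cases hc : ∃ b ∈ B, ∃ b' ∈ B, b ≠ b' ∧
        2 ≤ ((A.filter (fun u => G.Adj b u)) ∩ (A.filter (fun u => G.Adj b' u))).card
    · left
      obtain ⟨b, hbB, b', hb'B, hne, h2⟩ := hc
      obtain ⟨a, ha, a', ha', hane⟩ := Finset.one_lt_card.mp h2
      simp only [Finset.mem_inter, Finset.mem_filter] at ha ha'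
      obtain ⟨⟨haA, hba⟩, ⟨_, hb'a⟩⟩ := ha
      obtain ⟨⟨ha'A, hba'⟩, ⟨_, hb'a'⟩⟩ := ha'
      have hAB : ∀ x ∈ A, ∀ y ∈ B, x ≠ y := by
        intro x hx y hy h; exact (Finset.disjoint_left.mp hdisj hx) (h ▸ hy)
      rw [hasKDense_iff_sparse_compl, hasKSparse_iff]
      refine ⟨{b, b', a, a'}, ?_, ?_⟩
      · rw [Finset.card_insert_of_notMem (by simp [hne, (hAB a haA b hbB).symm,
            (hAB a' ha'A b hbB).symm]),
          Finset.card_insert_of_notMem (by simp [(hAB a haA b' hb'B).symm,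
            (hAB a' ha'A b' hb'B).symm]),
          Finset.card_insert_of_notMem (by simp [hane]), Finset.card_singleton]
      · intro v hv
        simp only [Finset.mem_insert, Finset.mem_singleton] at hv
        have sub : ∀ (x y z : V), G.Adj v y → G.Adj v z → x ≠ v →
            ({v, x, y, z} : Finset V) = {b, b', a, a'} →
            (({b, b', a, a'} : Finset V).filter (fun u => Gᶜ.Adj v u)).card ≤ 1 := by
          intro x y z hvy hvz hxv heq
          refine le_trans (Finset.card_le_card (t := {x}) ?_) (by simp)
          intro u hu
          simp only [Finset.mem_filter, ← heq, Finset.mem_insert, Finset.mem_singleton,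
            compl_adj] at hu ⊢
          obtain ⟨hmem, hune, hnadj⟩ := hu
          rcases hmem with rfl | rfl | rfl | rfl
          · exact absurd rfl hune
          · rfl
          · exact absurd hvy hnadj
          · exact absurd hvz hnadj
        rcases hv with rfl | rfl | rfl | rfl
        · exact sub b' a a' hba hba' hne.symm rfl
        · refine sub b a a' hb'a hb'a' hne ?_
          ext u; simp only [Finset.mem_insert, Finset.mem_singleton]; tauto
        · refine sub a' b b' (G.adj_symm hba) (G.adj_symm hb'a) hane.symm ?_
          ext u; simp only [Finset.mem_insert, Finset.mem_singleton]; tauto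
        · refine sub a b b' (G.adj_symm hba') (G.adj_symm hb'a') hane ?_
          ext u; simp only [Finset.mem_insert, Finset.mem_singleton]; tauto
    · push_neg at hc
      set eA := (A.equivFinOfCardEq hA).symm with heA
      set eB := (B.equivFinOfCardEq hB).symm with heB
      set f : Fin q → Finset (Fin (q + 1)) :=
        fun i => Finset.univ.filter (fun x => G.Adj (eB i).val (eA x).val) with hf
      have hfeq : ∀ (b : V),
          (Finset.univ.filter (fun x : Fin (q + 1) => G.Adj b (eA x).val)).card
            = (A.filter (fun u => G.Adj b u)).card := fun b => card_index hA _
      have hdeg : ∀ i, 2 ≤ (f i).card := by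
        intro i; rw [hf]; dsimp only; rw [hfeq]; exact hb2 _ (eB i).2
      have hcod : ∀ i k, i ≠ k → ((f i) ∩ (f k)).card ≤ 1 := by
        intro i k hik
        have hne : (eB i).val ≠ (eB k).val :=
          fun h => hik (eB.injective (Subtype.val_injective h))
        have e1 : (f i) ∩ (f k) = Finset.univ.filter
            (fun x : Fin (q + 1) =>
              G.Adj (eB i).val (eA x).val ∧ G.Adj (eB k).val (eA x).val) := by
          ext x; simp [hf, and_assoc, and_left_comm]
        have e2 : (A.filter (fun u => G.Adj (eB i).val u))
              ∩ (A.filter (fun u => G.Adj (eB k).val u))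
            = A.filter (fun u => G.Adj (eB i).val u ∧ G.Adj (eB k).val u) := by
          ext u; simp [and_assoc, and_left_comm]
        rw [e1, card_index hA (fun u => G.Adj (eB i).val u ∧ G.Adj (eB k).val u), ← e2]
        exact Nat.lt_succ_iff.mp (hc _ (eB i).2 _ (eB k).2 hne)
      obtain ⟨bs, as, h1, h2, h3⟩ := hq f hdeg hcod
      right
      rw [hasKSparse_iff]
      set S := bs.image (fun i => (eB i).val) ∪ as.image (fun x => (eA x).val) with hS
      have hBinj : Function.Injective (fun i : Fin q => (eB i).val) :=
        Subtype.val_injective.comp eB.injective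
      have hAinj : Function.Injective (fun x : Fin (q + 1) => (eA x).val) :=
        Subtype.val_injective.comp eA.injective
      have hSdisj : Disjoint (bs.image (fun i => (eB i).val))
          (as.image (fun x => (eA x).val)) := by
        apply Finset.disjoint_left.mpr
        intro u hu1 hu2
        simp only [Finset.mem_image] at hu1 hu2
        obtain ⟨i, _, rfl⟩ := hu1
        obtain ⟨x, _, hx⟩ := hu2
        exact (Finset.disjoint_left.mp hdisj (hx ▸ (eA x).2)) (eB i).2
      refine ⟨S, ?_, ?_⟩
      · rw [hS, Finset.card_union_of_disjoint hSdisj,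
          Finset.card_image_of_injective _ hBinj, Finset.card_image_of_injective _ hAinj, h1]
      · intro v hv
        rw [hS] at hv
        rcases Finset.mem_union.mp hv with hv | hv
        · obtain ⟨i, hi, rfl⟩ := Finset.mem_image.mp hv
          have hsub : S.filter (fun u => G.Adj (eB i).val u) ⊆
              (as.filter (fun x => G.Adj (eB i).val (eA x).val)).image
                (fun x => (eA x).val) := by
            intro u hu
            obtain ⟨huS, hadj⟩ := Finset.mem_filter.mp hu
            rcases Finset.mem_union.mp huS with hu' | hu'
            · obtain ⟨i', hi', rfl⟩ := Finset.mem_image.mp hu'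
              exact absurd hadj (hBI _ (eB i).2 _ (eB i').2)
            · obtain ⟨x, hx, rfl⟩ := Finset.mem_image.mp hu'
              exact Finset.mem_image_of_mem _ (Finset.mem_filter.mpr ⟨hx, hadj⟩)
          have e3 : as.filter (fun x => G.Adj (eB i).val (eA x).val) = (f i) ∩ as := by
            ext x; simp [hf, and_comm]
          calc (S.filter (fun u => G.Adj (eB i).val u)).card
              ≤ ((as.filter (fun x => G.Adj (eB i).val (eA x).val)).image
                  (fun x => (eA x).val)).card := Finset.card_le_card hsub
            _ ≤ (as.filter (fun x => G.Adj (eB i).val (eA x).val)).card :=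
                Finset.card_image_le
            _ = ((f i) ∩ as).card := by rw [e3]
            _ ≤ 1 := h2 i hi
        · obtain ⟨x, hx, rfl⟩ := Finset.mem_image.mp hv
          have hsub : S.filter (fun u => G.Adj (eA x).val u) ⊆
              (bs.filter (fun i => G.Adj (eA x).val (eB i).val)).image
                (fun i => (eB i).val) := by
            intro u hu
            obtain ⟨huS, hadj⟩ := Finset.mem_filter.mp hu
            rcases Finset.mem_union.mp huS with hu' | hu'
            · obtain ⟨i', hi', rfl⟩ := Finset.mem_image.mp hu'
              exact Finset.mem_image_of_mem _ (Finset.mem_filter.mpr ⟨hi', hadj⟩)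
            · obtain ⟨x', hx', rfl⟩ := Finset.mem_image.mp hu'
              exact absurd hadj (hAI _ (eA x).2 _ (eA x').2)
          have e4 : bs.filter (fun i => G.Adj (eA x).val (eB i).val)
              = bs.filter (fun i => x ∈ f i) := by
            apply Finset.filter_congr
            intro i _
            simp only [hf, Finset.mem_filter, Finset.mem_univ, true_and]
            constructor
            · exact fun h => G.adj_symm h
            · exact fun h => G.adj_symm h
          calc (S.filter (fun u => G.Adj (eA x).val u)).card
              ≤ ((bs.filter (fun i => G.Adj (eA x).val (eB i).val)).image
                  (fun i => (eB i).val)).card := Finset.card_le_card hsub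
            _ ≤ (bs.filter (fun i => G.Adj (eA x).val (eB i).val)).card :=
                Finset.card_image_le
            _ = (bs.filter (fun i => x ∈ f i)).card := by rw [e4]
            _ ≤ 1 := h3 x hx

lemma master {V : Type*} [Fintype V] [DecidableEq V] {q : ℕ} (hq : CoreProp q)
    (hcard : Fintype.card V = 2 * q + 1)
    (G : SimpleGraph V) (hcol : G.Colorable 2) :
    HasKDense G 1 4 ∨ HasKSparse G 1 (q + 2) := by
  classical
  obtain ⟨c⟩ := hcol
  set A₀ := Finset.univ.filter (fun v : V => c v = 0) with hA₀
  set A₁ := Finset.univ.filter (fun v : V => ¬ (c v = 0)) with hA₁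
  have hsum : A₀.card + A₁.card = 2 * q + 1 := by
    rw [hA₀, hA₁, Finset.card_filter_add_card_filter_not, Finset.card_univ, hcard]
  have hmono : ∀ v w : V, c v = c w → ¬ G.Adj v w := by
    intro v w hcw hadj; exact (c.valid hadj) hcw
  have hindep : ∀ s : Finset V, (∀ v ∈ s, ∀ w ∈ s, c v = c w) → q + 2 ≤ s.card →
      HasKSparse G 1 (q + 2) := by
    intro s hs hcard'
    obtain ⟨t, hts, htc⟩ := Finset.exists_subset_card_eq hcard'
    rw [hasKSparse_iff]
    refine ⟨t, htc, ?_⟩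
    intro v hv
    have : t.filter (fun u => G.Adj v u) = ∅ := by
      rw [Finset.filter_eq_empty_iff]
      intro u hu
      exact hmono v u (hs v (hts hv) u (hts hu))
    rw [this]; simp
  have hsame : ∀ v w : V, c v ≠ 0 → c w ≠ 0 → c v = c w := by
    intro v w hv hw
    have : ∀ x : Fin 2, x ≠ 0 → x = 1 := by decide
    rw [this _ hv, this _ hw]
  by_cases h0 : q + 2 ≤ A₀.card
  · refine Or.inr (hindep A₀ ?_ h0)
    intro v hv w hw
    simp only [hA₀, Finset.mem_filter] at hv hw
    rw [hv.2, hw.2]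
  by_cases h1 : q + 2 ≤ A₁.card
  · refine Or.inr (hindep A₁ ?_ h1)
    intro v hv w hw
    simp only [hA₁, Finset.mem_filter] at hv hw
    exact hsame v w hv.2 hw.2
  · have hdisj : Disjoint A₀ A₁ := Finset.disjoint_filter_filter_not _ _ _
    have hI₀ : ∀ v ∈ A₀, ∀ w ∈ A₀, ¬ G.Adj v w := by
      intro v hv w hw
      simp only [hA₀, Finset.mem_filter] at hv hw
      exact hmono v w (by rw [hv.2, hw.2])
    have hI₁ : ∀ v ∈ A₁, ∀ w ∈ A₁, ¬ G.Adj v w := by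
      intro v hv w hw
      simp only [hA₁, Finset.mem_filter] at hv hw
      exact hmono v w (hsame v w hv.2 hw.2)
    rcases (by omega : A₀.card = q + 1 ∧ A₁.card = q ∨ A₁.card = q + 1 ∧ A₀.card = q) with
      ⟨ha, hb⟩ | ⟨ha, hb⟩
    · exact inner_lemma hq G A₀ A₁ hdisj ha hb hI₀ hI₁
    · exact inner_lemma hq G A₁ A₀ hdisj.symm ha hb hI₁ hI₀

/-! ### Extremal graphs -/

def bK13 : Fin 4 → Fin 4 → Bool := fun x y => (x == 0 || y == 0) && x != y
def gK13 : SimpleGraph (Fin 4) :=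
  ⟨fun x y => bK13 x y = true,
   ⟨fun x y h => (by decide : ∀ x y : Fin 4, bK13 x y = true → bK13 y x = true) x y h⟩,
   ⟨fun x h => (by decide : ∀ x : Fin 4, ¬ bK13 x x = true) x h⟩⟩
instance : DecidableRel gK13.Adj := fun x y => inferInstanceAs (Decidable (bK13 x y = true))

def bCyc (n : ℕ) : Fin n → Fin n → Bool :=
  fun x y => ((x.val + 1) % n == y.val) || ((y.val + 1) % n == x.val)
def gC6 : SimpleGraph (Fin 6) :=
  ⟨fun x y => bCyc 6 x y = true,
   ⟨fun x y h => (by decide : ∀ x y : Fin 6, bCyc 6 x y = true → bCyc 6 y x = true) x y h⟩,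
   ⟨fun x h => (by decide : ∀ x : Fin 6, ¬ bCyc 6 x x = true) x h⟩⟩
instance : DecidableRel gC6.Adj := fun x y => inferInstanceAs (Decidable (bCyc 6 x y = true))
def gC8 : SimpleGraph (Fin 8) :=
  ⟨fun x y => bCyc 8 x y = true,
   ⟨fun x y h => (by decide : ∀ x y : Fin 8, bCyc 8 x y = true → bCyc 8 y x = true) x y h⟩,
   ⟨fun x h => (by decide : ∀ x : Fin 8, ¬ bCyc 8 x x = true) x h⟩⟩
instance : DecidableRel gC8.Adj := fun x y => inferInstanceAs (Decidable (bCyc 8 x y = true))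

lemma gK13_col : gK13.Colorable 2 :=
  ⟨SimpleGraph.Coloring.mk (fun v => if v = 0 then 0 else 1)
    (fun {v w} h => (by decide :
      ∀ v w : Fin 4, gK13.Adj v w →
        (if v = 0 then (0 : Fin 2) else 1) ≠ (if w = 0 then 0 else 1)) v w h)⟩
lemma gC6_col : gC6.Colorable 2 :=
  ⟨SimpleGraph.Coloring.mk (fun v => ⟨v.val % 2, Nat.mod_lt _ (by omega)⟩)
    (fun {v w} h => (by decide :
      ∀ v w : Fin 6, gC6.Adj v w →
        (⟨v.val % 2, Nat.mod_lt _ (by omega)⟩ : Fin 2) ≠ ⟨w.val % 2, Nat.mod_lt _ (by omega)⟩)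
      v w h)⟩
lemma gC8_col : gC8.Colorable 2 :=
  ⟨SimpleGraph.Coloring.mk (fun v => ⟨v.val % 2, Nat.mod_lt _ (by omega)⟩)
    (fun {v w} h => (by decide :
      ∀ v w : Fin 8, gC8.Adj v w →
        (⟨v.val % 2, Nat.mod_lt _ (by omega)⟩ : Fin 2) ≠ ⟨w.val % 2, Nat.mod_lt _ (by omega)⟩)
      v w h)⟩

lemma gK13_nd : ¬ HasKDense gK13 1 4 := by
  rw [show HasKDense gK13 1 4 = HasKSparse gK13ᶜ 1 4 from rfl, hasKSparse_iff]
  decide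
lemma gK13_ns : ¬ HasKSparse gK13 1 4 := by
  rw [hasKSparse_iff]; decide
lemma gC6_nd : ¬ HasKDense gC6 1 4 := by
  rw [show HasKDense gC6 1 4 = HasKSparse gC6ᶜ 1 4 from rfl, hasKSparse_iff]
  decide
lemma gC6_ns : ¬ HasKSparse gC6 1 5 := by
  rw [hasKSparse_iff]; decide
set_option maxRecDepth 40000 in
lemma gC8_nd : ¬ HasKDense gC8 1 4 := by
  rw [show HasKDense gC8 1 4 = HasKSparse gC8ᶜ 1 4 from rfl, hasKSparse_iff]
  decide
set_option maxRecDepth 40000 in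
lemma gC8_ns : ¬ HasKSparse gC8 1 6 := by
  rw [hasKSparse_iff]; decide

theorem stmt14 (j : ℕ) (hj : j = 4 ∨ j = 5 ∨ j = 6) :
    (∀ G : SimpleGraph (Fin (2 * j - 3)), G.Colorable 2 →
        HasKDense G 1 4 ∨ HasKSparse G 1 j) ∧
    (∃ G : SimpleGraph (Fin (2 * j - 4)),
        G.Colorable 2 ∧ ¬ HasKDense G 1 4 ∧ ¬ HasKSparse G 1 j) := by
  rcases hj with rfl | rfl | rfl
  · exact ⟨fun G hcol => master coreProp2 (by simp) G hcol,
      ⟨gK13, gK13_col, gK13_nd, gK13_ns⟩⟩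
  · exact ⟨fun G hcol => master coreProp3 (by simp) G hcol,
      ⟨gC6, gC6_col, gC6_nd, gC6_ns⟩⟩
  · exact ⟨fun G hcol => master coreProp4 (by simp) G hcol,
      ⟨gC8, gC8_col, gC8_nd, gC8_ns⟩⟩
end

section
/- Let k ≥ 2 and i ≥ 2k+3. Then no bipartite graph contains a k-dense set of size i. -/
open SimpleGraph

theorem Set.inter_nonempty_of_ncard_lt_ncard_add_ncard {α : Type*} {s t u : Set α}
    (hs : s.Finite) (hts : t ⊆ s) (hus : u ⊆ s) (hstu : s.ncard < t.ncard + u.ncard) :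
    (t ∩ u).Nonempty := by
  have hunion : (t ∪ u).ncard ≤ s.ncard := Set.ncard_le_ncard (Set.union_subset hts hus) hs
  have hsum := Set.ncard_inter_add_ncard_union t u (hs.subset hts) (hs.subset hus)
  exact Set.nonempty_of_ncard_ne_zero (by omega)

namespace KDense

variable {V : Type*} {G : SimpleGraph V} {k : ℕ} {D : Set V}

theorem ncard_le_ncard_adj_add (hD : D.Finite) (h : KDense G k D) {v : V} (hv : v ∈ D) :
    D.ncard ≤ {u ∈ D | G.Adj v u}.ncard + k + 1 := by
  have hcover : D ⊆ insert v ({u ∈ D | G.Adj v u} ∪ {u ∈ D | Gᶜ.Adj v u}) := by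
    intro u hu
    by_cases huv : v = u
    · exact Or.inl huv.symm
    · by_cases hadj : G.Adj v u
      · exact Or.inr (Or.inl ⟨hu, hadj⟩)
      · exact Or.inr (Or.inr ⟨hu, (compl_adj G v u).2 ⟨huv, hadj⟩⟩)
  calc D.ncard ≤ (insert v ({u ∈ D | G.Adj v u} ∪ {u ∈ D | Gᶜ.Adj v u})).ncard :=
        Set.ncard_le_ncard hcover (((hD.subset fun _ hu ↦ hu.1).union
          (hD.subset fun _ hu ↦ hu.1)).insert v)
    _ ≤ ({u ∈ D | G.Adj v u} ∪ {u ∈ D | Gᶜ.Adj v u}).ncard + 1 := Set.ncard_insert_le _ _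
    _ ≤ {u ∈ D | G.Adj v u}.ncard + {u ∈ D | Gᶜ.Adj v u}.ncard + 1 := by
        gcongr; exact Set.ncard_union_le _ _
    _ ≤ {u ∈ D | G.Adj v u}.ncard + k + 1 := by gcongr; exact h v hv

/-- Two adjacent vertices of `D` each have at least `D.ncard - k - 1` neighbours in `D`, together
more than `D.ncard`, so a common neighbour closes a triangle. -/
theorem not_cliqueFree_three (h : KDense G k D) (hD : 2 * k + 3 ≤ D.ncard) :
    ¬ G.CliqueFree 3 := by
  have hfin : D.Finite := Set.finite_of_ncard_pos (by omega)
  have hnbr v (hv : v ∈ D) := h.ncard_le_ncard_adj_add hfin hv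
  obtain ⟨v, hv⟩ := Set.nonempty_of_ncard_ne_zero (s := D) (by omega)
  obtain ⟨u, huD, hvu⟩ := Set.nonempty_of_ncard_ne_zero (s := {u ∈ D | G.Adj v u})
    (by have := hnbr v hv; omega)
  obtain ⟨w, ⟨-, hvw⟩, -, huw⟩ := Set.inter_nonempty_of_ncard_lt_ncard_add_ncard hfin
    (t := {w ∈ D | G.Adj v w}) (u := {w ∈ D | G.Adj u w}) (fun _ hw ↦ hw.1) (fun _ hw ↦ hw.1)
    (by have := hnbr v hv; have := hnbr u huD; omega)
  classical
  exact fun hfree ↦ hfree {v, u, w} (is3Clique_triple_iff.2 ⟨hvu, hvw, huw⟩)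

end KDense

theorem stmt15_general {V : Type*} (G : SimpleGraph V) (k i : ℕ)
    (hi : 2 * k + 3 ≤ i) (hbip : G.Colorable 2) :
    ¬ HasKDense G k i := by
  rintro ⟨D, rfl, hdense⟩
  exact hdense.not_cliqueFree_three hi (hbip.cliqueFree (by norm_num))

theorem stmt15 {V : Type*} [Fintype V] (G : SimpleGraph V) (k i : ℕ)
    (hk : 2 ≤ k) (hi : 2 * k + 3 ≤ i) (hbip : G.Colorable 2) :
    ¬ HasKDense G k i :=
  stmt15_general G k i hi hbip
end

section
/- Let i, j, k satisfy (i−k−2)(j−k−2) ≥ (k+1)², i,j ≥ k+3. Then there exists a split graph on i+j−2 vertices with no k-dense i-set and no k-sparse j-set; combined with the classical split-graph Ramsey number R_0^SP(i,j) = i+j−1, this gives R_k^SP(i,j) = i+j−1. -/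
open SimpleGraph

lemma card_mod_filter_le (M n c t : ℕ) (hM : M ≤ c * n) :
    ((Finset.range M).filter (fun m => m % n = t)).card ≤ c := by
  have h := Finset.card_le_card_of_injOn (f := fun m => m / n)
    (s := (Finset.range M).filter (fun m => m % n = t)) (t := Finset.range c)
    (by
      intro m hm
      simp only [Finset.coe_filter, Finset.mem_coe, Set.mem_setOf_eq, Finset.mem_filter, Finset.mem_range] at hm ⊢
      exact Nat.div_lt_of_lt_mul (lt_of_lt_of_le hm.1 (by rw [mul_comm] at hM; exact hM)))
    (by
      intro m1 h1 m2 h2 hd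
      simp only [Finset.coe_filter, Set.mem_setOf_eq, Finset.mem_range] at h1 h2
      have e1 := Nat.div_add_mod m1 n
      have e2 := Nat.div_add_mod m2 n
      simp only at hd
      rw [hd, h1.2] at e1
      rw [show m2 % n = t from h2.2] at e2
      omega)
  simpa using h

/-- covering relation for the extremal split graph: clique vertex `s` is adjacent to
independent vertex `t`. -/
def Cov (k j s t : ℕ) : Prop := ∃ r, r ≤ k ∧ (s * (k + 1) + r) % (j - 1) = t

/-- the extremal split graph. -/
def splitG (k i j : ℕ) : SimpleGraph (Fin (i + j - 2)) :=
  SimpleGraph.fromRel (fun u v =>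
    (u.val < i - 1 ∧ v.val < i - 1) ∨
    (u.val < i - 1 ∧ i - 1 ≤ v.val ∧ Cov k j u.val (v.val - (i - 1))))

theorem stmt17 (k i j : ℕ) (hi : k + 3 ≤ i) (hj : k + 3 ≤ j)
    (h : (k + 1) ^ 2 ≤ (i - k - 2) * (j - k - 2)) :
    (∃ G : SimpleGraph (Fin (i + j - 2)),
        IsSplit G ∧ ¬ HasKDense G k i ∧ ¬ HasKSparse G k j) ∧
    (∀ G : SimpleGraph (Fin (i + j - 1)), IsSplit G →
        HasKDense G k i ∨ HasKSparse G k j) := by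
  have hn2 : 0 < j - 1 := by omega
  constructor
  · -- the extremal graph
    -- key counting inequality
    have key : (i - 1) * (k + 1) ≤ (i - k - 2) * (j - 1) := by
      obtain ⟨a, rfl⟩ : ∃ a, i = a + (k + 3) := ⟨i - (k + 3), by omega⟩
      obtain ⟨b, rfl⟩ : ∃ b, j = b + (k + 3) := ⟨j - (k + 3), by omega⟩
      have e1 : a + (k + 3) - 1 = a + k + 2 := by omega
      have e2 : a + (k + 3) - k - 2 = a + 1 := by omega
      have e3 : b + (k + 3) - 1 = b + k + 2 := by omega
      have e4 : b + (k + 3) - k - 2 = b + 1 := by omega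
      rw [e1, e2]
      rw [e2, e4] at h
      nlinarith [h]
    -- bound on the degree of an independent vertex
    have hdeg : ∀ t : ℕ,
        ({u : Fin (i + j - 2) | u.val < i - 1 ∧ Cov k j u.val t}).ncard ≤ i - k - 2 := by
      intro t
      classical
      have hF : ({u : Fin (i + j - 2) | u.val < i - 1 ∧ Cov k j u.val t}).ncard
          ≤ (((((Finset.range ((i - 1) * (k + 1))).filter
              (fun m => m % (j - 1) = t)).image (fun m => m / (k + 1))) : Finset ℕ) :
              Set ℕ).ncard := by
        apply Set.ncard_le_ncard_of_injOn (fun v => v.val)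
        · rintro u ⟨hu1, r, hr, hrt⟩
          simp only [Finset.coe_image, Set.mem_image, Finset.mem_coe, Finset.mem_filter,
            Finset.mem_range]
          refine ⟨u.val * (k + 1) + r, ⟨?_, hrt⟩, ?_⟩
          · have hle : u.val + 1 ≤ i - 1 := hu1
            have : (u.val + 1) * (k + 1) ≤ (i - 1) * (k + 1) := Nat.mul_le_mul_right _ hle
            nlinarith
          · rw [mul_comm, Nat.mul_add_div (by omega)]
            rw [Nat.div_eq_of_lt (by omega : r < k + 1)]
            omega
        · exact fun a _ b _ hab => Fin.ext hab
      rw [Set.ncard_coe_finset] at hF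
      calc ({u : Fin (i + j - 2) | u.val < i - 1 ∧ Cov k j u.val t}).ncard
          ≤ _ := hF
        _ ≤ ((Finset.range ((i - 1) * (k + 1))).filter (fun m => m % (j - 1) = t)).card :=
            Finset.card_image_le
        _ ≤ i - k - 2 := card_mod_filter_le _ _ _ _ key
    refine ⟨splitG k i j, ⟨{v | v.val < i - 1}, ?_, ?_⟩, ?_, ?_⟩
    · -- clique
      intro u hu v hv huv
      simp only [Set.mem_setOf_eq] at hu hv
      exact ⟨huv, Or.inl (Or.inl ⟨hu, hv⟩)⟩
    · -- independent set
      intro u hu v hv huv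
      simp only [Set.mem_compl_iff, Set.mem_setOf_eq] at hu hv
      rw [SimpleGraph.compl_adj]
      refine ⟨huv, ?_⟩
      rintro ⟨-, hc | hc⟩
      · exact hc.elim (fun h' => hu h'.1) (fun h' => hu h'.1)
      · exact hc.elim (fun h' => hv h'.1) (fun h' => hv h'.1)
    · -- no k-dense i-set
      rintro ⟨D, hDcard, hD⟩
      have hex : ∃ b ∈ D, i - 1 ≤ b.val := by
        by_contra hc
        push_neg at hc
        have hle : D.ncard ≤ ((Finset.range (i - 1) : Finset ℕ) : Set ℕ).ncard := by
          apply Set.ncard_le_ncard_of_injOn (fun v => v.val)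
          · intro a ha
            simp only [Finset.coe_range, Set.mem_Iio]
            exact hc a ha
          · exact fun a _ b _ hab => Fin.ext hab
        rw [Set.ncard_coe_finset, Finset.card_range, hDcard] at hle
        omega
      obtain ⟨b, hbD, hb⟩ := hex
      have hA := hD b hbD
      have hsub : D ⊆ ({u ∈ D | (splitG k i j)ᶜ.Adj b u}) ∪
          ({b} ∪ {u : Fin (i + j - 2) | u.val < i - 1 ∧ Cov k j u.val (b.val - (i - 1))}) := by
        intro u hu
        by_cases hub : u = b
        · exact Or.inr (Or.inl (by simp [hub]))
        by_cases hadj : (splitG k i j).Adj b u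
        · refine Or.inr (Or.inr ?_)
          obtain ⟨-, hc | hc⟩ := hadj
          · rcases hc with ⟨hb1, -⟩ | ⟨hb1, -⟩ <;> omega
          · rcases hc with ⟨h1, h2⟩ | ⟨h1, h2, h3⟩
            · omega
            · exact ⟨h1, h3⟩
        · exact Or.inl ⟨hu, by
            rw [SimpleGraph.compl_adj]
            exact ⟨fun h' => hub h'.symm, hadj⟩⟩
      have hcard : D.ncard ≤ k + (1 + (i - k - 2)) := by
        calc D.ncard ≤ _ := Set.ncard_le_ncard hsub (Set.toFinite _)
          _ ≤ ({u ∈ D | (splitG k i j)ᶜ.Adj b u}).ncard +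
              (({b} : Set (Fin (i + j - 2))) ∪
                {u : Fin (i + j - 2) | u.val < i - 1 ∧
                  Cov k j u.val (b.val - (i - 1))}).ncard := Set.ncard_union_le _ _
          _ ≤ ({u ∈ D | (splitG k i j)ᶜ.Adj b u}).ncard +
              ((({b} : Set (Fin (i + j - 2)))).ncard +
                ({u : Fin (i + j - 2) | u.val < i - 1 ∧
                  Cov k j u.val (b.val - (i - 1))}).ncard) := by
              exact Nat.add_le_add_left (Set.ncard_union_le _ _) _
          _ ≤ k + (1 + (i - k - 2)) := by
              have h1 := hdeg (b.val - (i - 1))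
              have h2 : ({b} : Set (Fin (i + j - 2))).ncard = 1 := Set.ncard_singleton b
              omega
      omega
    · -- no k-sparse j-set
      rintro ⟨S, hScard, hS⟩
      have hex : ∃ a ∈ S, a.val < i - 1 := by
        by_contra hc
        push_neg at hc
        have hle : S.ncard ≤ ((Finset.range (j - 1) : Finset ℕ) : Set ℕ).ncard := by
          apply Set.ncard_le_ncard_of_injOn (fun v => v.val - (i - 1))
          · intro a ha
            have h1 := hc a ha
            have h2 := a.isLt
            simp only [Finset.coe_range, Set.mem_Iio]
            omega
          · intro a ha b hb hab
            have h1 := hc a ha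
            have h2 := hc b hb
            simp only at hab
            exact Fin.ext (by omega)
        rw [Set.ncard_coe_finset, Finset.card_range, hScard] at hle
        omega
      obtain ⟨a, haS, ha⟩ := hex
      set NI : Set (Fin (i + j - 2)) :=
        {v | (i - 1) ≤ v.val ∧ Cov k j a.val (v.val - (i - 1))} with hNI
      set SK : Set (Fin (i + j - 2)) := S ∩ {v | v.val < i - 1} with hSK
      set SI : Set (Fin (i + j - 2)) := S ∩ {v | i - 1 ≤ v.val} with hSI
      set I' : Set (Fin (i + j - 2)) := {v | i - 1 ≤ v.val} with hI'
      have hNIcard : k + 1 ≤ NI.ncard := by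
        have hle : ((Finset.range (k + 1) : Finset ℕ) : Set ℕ).ncard ≤ NI.ncard := by
          apply Set.ncard_le_ncard_of_injOn
            (fun r => (⟨(i - 1) + (a.val * (k + 1) + r) % (j - 1), by
              have := Nat.mod_lt (a.val * (k + 1) + r) hn2
              omega⟩ : Fin (i + j - 2)))
          · intro r hr
            simp only [Finset.coe_range, Set.mem_Iio] at hr
            refine ⟨by simp, r, by omega, ?_⟩
            simp only
            omega
          · intro r1 h1 r2 h2 heq
            simp only [Finset.coe_range, Set.mem_Iio] at h1 h2
            have hval : (i - 1) + (a.val * (k + 1) + r1) % (j - 1)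
                = (i - 1) + (a.val * (k + 1) + r2) % (j - 1) := congrArg Fin.val heq
            have hmod : (a.val * (k + 1) + r1) % (j - 1)
                = (a.val * (k + 1) + r2) % (j - 1) := by omega
            have hme : r1 ≡ r2 [MOD j - 1] :=
              Nat.ModEq.add_left_cancel' (a.val * (k + 1)) hmod
            have := hme.eq_of_lt_of_lt (by omega) (by omega)
            omega
        rw [Set.ncard_coe_finset, Finset.card_range] at hle
        exact hle
      have hT := hS a haS
      have hsub : (SK \ {a}) ∪ (NI ∩ S) ⊆ {u ∈ S | (splitG k i j).Adj a u} := by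
        rintro u (⟨⟨huS, hu1⟩, hune⟩ | ⟨⟨hu1, hu2⟩, huS⟩)
        · simp only [Set.mem_singleton_iff] at hune
          exact ⟨huS, ⟨fun h' => hune h'.symm, Or.inl (Or.inl ⟨ha, hu1⟩)⟩⟩
        · refine ⟨huS, ⟨?_, Or.inl (Or.inr ⟨ha, hu1, hu2⟩)⟩⟩
          intro h'
          have := congrArg Fin.val h'
          omega
      have hdisj : Disjoint (SK \ {a}) (NI ∩ S) := by
        rw [Set.disjoint_left]
        rintro u ⟨⟨-, hu1⟩, -⟩ ⟨⟨hu2, -⟩, -⟩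
        simp only [Set.mem_setOf_eq] at hu1
        omega
      have c1 : (SK \ {a}).ncard + (NI ∩ S).ncard = ((SK \ {a}) ∪ (NI ∩ S)).ncard :=
        (Set.ncard_union_eq hdisj (Set.toFinite _) (Set.toFinite _)).symm
      have c2 : ((SK \ {a}) ∪ (NI ∩ S)).ncard ≤ ({u ∈ S | (splitG k i j).Adj a u}).ncard :=
        Set.ncard_le_ncard hsub (Set.toFinite _)
      have c3 : (SK \ {a}).ncard + 1 = SK.ncard :=
        Set.ncard_diff_singleton_add_one ⟨haS, ha⟩ (Set.toFinite _)
      have c4 : k + 1 ≤ (NI ∩ S).ncard + (I' \ SI).ncard := by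
        have hsub2 : NI ⊆ (NI ∩ S) ∪ (I' \ SI) := by
          intro u hu
          by_cases huS : u ∈ S
          · exact Or.inl ⟨hu, huS⟩
          · exact Or.inr ⟨hu.1, fun hmem => huS hmem.1⟩
        calc k + 1 ≤ NI.ncard := hNIcard
          _ ≤ ((NI ∩ S) ∪ (I' \ SI)).ncard := Set.ncard_le_ncard hsub2 (Set.toFinite _)
          _ ≤ _ := Set.ncard_union_le _ _
      have c5 : (I' \ SI).ncard + SI.ncard = I'.ncard :=
        Set.ncard_diff_add_ncard_of_subset Set.inter_subset_right (Set.toFinite _)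
      have c6 : I'.ncard ≤ j - 1 := by
        have hle : I'.ncard ≤ ((Finset.range (j - 1) : Finset ℕ) : Set ℕ).ncard := by
          apply Set.ncard_le_ncard_of_injOn (fun v => v.val - (i - 1))
          · intro u hu
            have h2 := u.isLt
            simp only [hI', Set.mem_setOf_eq] at hu
            simp only [Finset.coe_range, Set.mem_Iio]
            omega
          · intro u h1 v h2 hab
            simp only [hI', Set.mem_setOf_eq] at h1 h2
            simp only at hab
            exact Fin.ext (by omega)
        rwa [Set.ncard_coe_finset, Finset.card_range] at hle
      have c7 : SK.ncard + SI.ncard = S.ncard := by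
        have hU : SK ∪ SI = S := by
          ext u
          simp only [hSK, hSI, Set.mem_union, Set.mem_inter_iff, Set.mem_setOf_eq]
          constructor
          · rintro (⟨h1, -⟩ | ⟨h1, -⟩) <;> exact h1
          · intro h1
            by_cases hcase : u.val < i - 1
            · exact Or.inl ⟨h1, hcase⟩
            · exact Or.inr ⟨h1, Nat.le_of_not_lt hcase⟩
        have hd : Disjoint SK SI := by
          rw [Set.disjoint_left]
          rintro u ⟨-, h1⟩ ⟨-, h2⟩
          simp only [Set.mem_setOf_eq] at h1 h2
          omega
        rw [← hU, Set.ncard_union_eq hd (Set.toFinite _) (Set.toFinite _)]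
      have c8 : 1 ≤ SK.ncard := by
        have : SK.Nonempty := ⟨a, haS, ha⟩
        have := Set.ncard_pos (Set.toFinite SK) |>.mpr this
        omega
      omega
  · -- the classical split-graph Ramsey bound
    intro G hG
    obtain ⟨K, hK, hKc⟩ := hG
    have hcompl := Set.ncard_add_ncard_compl K (Set.toFinite _) (Set.toFinite _)
    have hcardV : Nat.card (Fin (i + j - 1)) = i + j - 1 := by simp
    by_cases hKi : i ≤ K.ncard
    · left
      obtain ⟨D, hDK, hDcard⟩ := Set.exists_subset_card_eq hKi
      refine ⟨D, hDcard, ?_⟩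
      intro v hv
      have hempty : {u | u ∈ D ∧ Gᶜ.Adj v u} = ∅ := by
        ext u
        simp only [Set.mem_setOf_eq, Set.mem_empty_iff_false, iff_false, not_and]
        intro huD hadj
        rw [SimpleGraph.compl_adj] at hadj
        exact hadj.2 (hK (hDK hv) (hDK huD) hadj.1)
      show ({u ∈ D | Gᶜ.Adj v u}).ncard ≤ k
      rw [show {u ∈ D | Gᶜ.Adj v u} = {u | u ∈ D ∧ Gᶜ.Adj v u} from rfl, hempty]
      simp
    · right
      have hKj : j ≤ Kᶜ.ncard := by omega
      obtain ⟨S, hSK, hScard⟩ := Set.exists_subset_card_eq hKj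
      refine ⟨S, hScard, ?_⟩
      intro v hv
      have hempty : {u | u ∈ S ∧ G.Adj v u} = ∅ := by
        ext u
        simp only [Set.mem_setOf_eq, Set.mem_empty_iff_false, iff_false, not_and]
        intro huS hadj
        have := hKc (hSK hv) (hSK huS) hadj.ne
        rw [SimpleGraph.compl_adj] at this
        exact this.2 hadj
      show ({u ∈ S | G.Adj v u}).ncard ≤ k
      rw [show {u ∈ S | G.Adj v u} = {u | u ∈ S ∧ G.Adj v u} from rfl, hempty]
      simp
end
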